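/- arXiv:1005.2644 — 7 statements merged into one kernel-verified Lean document; each statement's English description precedes it below -/
import Mathlib

section
/- Let 𝔽_q be a finite field, χ : 𝔽_q → ℂ a nontrivial additive character, P ∈ 𝔽_q[x₁,…,x_d] a nonzero homogeneous polynomial of degree k ≥ 1, and H = {x ∈ 𝔽_q^d : P(x) = 0}. Then for every m ∈ 𝔽_q^d one has the exact identity (q − 1) · Σ_{x∈H} χ(−m·x) = q·|H ∩ Π_m| − |H|; equivalently, Ĥ(m) = (q|H ∩ Π_m| − |H|)/(q^{d+1} − q^d). -/
/-!
The zero set `H` of a homogeneous polynomial is a cone: it is stable under scaling by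
`t ≠ 0`. Hence, for a linear form `ℓ` (here `ℓ x = -(m · x)`), the sum
`S t = ∑ x ∈ H, χ (t * ℓ x)` takes the same value for every `t ≠ 0`, so
`∑ t, S t = |H| + (q - 1) S 1`. Swapping the sums, orthogonality of `χ` evaluates the same
double sum as `q · |{x ∈ H | ℓ x = 0}|`.
-/

open Finset

theorem MvPolynomial.IsHomogeneous.eval_smul {R σ : Type*} [CommSemiring R] {P : MvPolynomial σ R}
    {k : ℕ} (hP : P.IsHomogeneous k) (t : R) (x : σ → R) :
    MvPolynomial.eval (t • x) P = t ^ k * MvPolynomial.eval x P := by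
  rw [MvPolynomial.eval_eq, MvPolynomial.eval_eq, mul_sum]
  refine sum_congr rfl fun e he => ?_
  have hdeg : e.degree = k := by
    rw [Finsupp.degree_eq_weight_one]
    exact hP (MvPolynomial.mem_support_iff.mp he)
  simp only [Pi.smul_apply, smul_eq_mul, mul_pow, prod_mul_distrib, prod_pow_eq_pow_sum,
    ← Finsupp.degree_apply, hdeg]
  ring

theorem Finset.sum_comp_smul_of_smul_mem {F V M : Type*} [Field F] [AddCommGroup V] [Module F V]
    [AddCommMonoid M] {H : Finset V} (hH : ∀ t : F, t ≠ 0 → ∀ x ∈ H, t • x ∈ H)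
    (g : V → M) {t : F} (ht : t ≠ 0) :
    ∑ x ∈ H, g (t • x) = ∑ x ∈ H, g x :=
  sum_nbij' (t • ·) (t⁻¹ • ·) (hH t ht) (hH t⁻¹ (inv_ne_zero ht))
    (fun x _ => inv_smul_smul₀ ht x) (fun x _ => smul_inv_smul₀ ht x) (fun _ _ => rfl)

section CharacterSum

variable {F R ι : Type*} [Field F] [Fintype F] [DecidableEq F] [CommRing R] [IsDomain R]
  {ψ : AddChar F R}

theorem AddChar.sum_sum_mul_eq_card_mul_card_filter (hψ : ψ.IsPrimitive) (s : Finset ι)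
    (f : ι → F) :
    ∑ t : F, ∑ x ∈ s, ψ (t * f x) = Fintype.card F * #{x ∈ s | f x = 0} := by
  rw [sum_comm, mul_comm, ← nsmul_eq_mul, ← sum_const, sum_filter]
  refine sum_congr rfl fun x _ => ?_
  rw [AddChar.sum_mulShift _ hψ]
  push_cast
  rfl

theorem AddChar.card_sub_one_mul_sum_eq_of_smul_mem {V : Type*} [AddCommGroup V] [Module F V]
    (hψ : ψ.IsPrimitive) {H : Finset V} (hH : ∀ t : F, t ≠ 0 → ∀ x ∈ H, t • x ∈ H)
    (ℓ : V →ₗ[F] F) :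
    ((Fintype.card F : R) - 1) * ∑ x ∈ H, ψ (ℓ x)
      = Fintype.card F * #{x ∈ H | ℓ x = 0} - #H := by
  set S : F → R := fun t => ∑ x ∈ H, ψ (t * ℓ x)
  have hS : ∀ t ≠ 0, S t = S 1 := fun t ht => by
    simpa [S, map_smul] using sum_comp_smul_of_smul_mem hH (fun x => ψ (ℓ x)) ht
  have hsum : ∑ t, S t = #H + (Fintype.card F - 1) * S 1 := by
    rw [← add_sum_erase _ _ (mem_univ 0), sum_congr rfl fun t ht => hS t (ne_of_mem_erase ht),
      sum_const, card_erase_of_mem (mem_univ 0), card_univ, nsmul_eq_mul,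
      Nat.cast_sub Fintype.card_pos]
    simp [S]
  have hdouble := AddChar.sum_sum_mul_eq_card_mul_card_filter hψ H ℓ
  simp only [one_mul, S] at hsum
  linear_combination hdouble - hsum

end CharacterSum

theorem stmt_1_general {F : Type} [Field F] [Fintype F] [DecidableEq F]
    (χ : AddChar F ℂ) (hχ : χ ≠ 1)
    (d k : ℕ)
    (P : MvPolynomial (Fin d) F) (hhom : P.IsHomogeneous k)
    (H : Finset (Fin d → F)) (hH : ∀ x, x ∈ H ↔ MvPolynomial.eval x P = 0)
    (m : Fin d → F) :
    ((Fintype.card F : ℂ) - 1) * ∑ x ∈ H, χ (-(∑ i, m i * x i))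
        = (Fintype.card F : ℂ) *
            ((H ∩ Finset.univ.filter (fun x : Fin d → F => ∑ i, m i * x i = 0)).card : ℂ)
          - (H.card : ℂ)
    ∧ ((Fintype.card F : ℂ))⁻¹ ^ d * ∑ x ∈ H, χ (-(∑ i, m i * x i))
        = ((Fintype.card F : ℂ) *
            ((H ∩ Finset.univ.filter (fun x : Fin d → F => ∑ i, m i * x i = 0)).card : ℂ)
          - (H.card : ℂ))
          / ((Fintype.card F : ℂ) ^ (d + 1) - (Fintype.card F : ℂ) ^ d) := by
  have hcone : ∀ t : F, t ≠ 0 → ∀ x ∈ H, t • x ∈ H := fun t _ x hx => by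
    rw [hH] at hx ⊢
    rw [hhom.eval_smul, hx, mul_zero]
  have hfilter : {x ∈ H | -(∑ i, m i * x i) = 0}
      = H ∩ univ.filter (fun x : Fin d → F => ∑ i, m i * x i = 0) := by
    ext x
    simp
  have hidentity := AddChar.card_sub_one_mul_sum_eq_of_smul_mem
    (AddChar.IsPrimitive.of_ne_one hχ) hcone (-dotProductBilin F F m)
  simp only [LinearMap.neg_apply, dotProductBilin_apply_apply, dotProduct] at hidentity
  rw [hfilter] at hidentity
  refine ⟨hidentity, ?_⟩
  have hq : (Fintype.card F : ℂ) ≠ 0 := Nat.cast_ne_zero.mpr Fintype.card_ne_zero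
  have hq1 : (Fintype.card F : ℂ) - 1 ≠ 0 :=
    sub_ne_zero.mpr (Nat.cast_ne_one.mpr Fintype.one_lt_card.ne')
  rw [← hidentity, pow_succ, ← mul_sub_one, inv_pow]
  field_simp

/-- For a nonzero homogeneous polynomial `P` of degree `k ≥ 1` in `d` variables
over `𝔽_q`, with `H = {P = 0}`, for every `m ∈ 𝔽_q^d` one has the exact identity
`(q − 1)·Σ_{x∈H} χ(−m·x) = q·|H ∩ Π_m| − |H|`; equivalently
`Ĥ(m) = (q·|H ∩ Π_m| − |H|)/(q^{d+1} − q^d)`. -/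
theorem stmt_1 {F : Type} [Field F] [Fintype F] [DecidableEq F]
    (χ : AddChar F ℂ) (hχ : χ ≠ 1)
    (d k : ℕ) (hk : 1 ≤ k)
    (P : MvPolynomial (Fin d) F) (hP : P ≠ 0) (hhom : P.IsHomogeneous k)
    (H : Finset (Fin d → F)) (hH : ∀ x, x ∈ H ↔ MvPolynomial.eval x P = 0)
    (m : Fin d → F) :
    ((Fintype.card F : ℂ) - 1) * ∑ x ∈ H, χ (-(∑ i, m i * x i))
        = (Fintype.card F : ℂ) *
            ((H ∩ Finset.univ.filter (fun x : Fin d → F => ∑ i, m i * x i = 0)).card : ℂ)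
          - (H.card : ℂ)
    ∧ ((Fintype.card F : ℂ))⁻¹ ^ d * ∑ x ∈ H, χ (-(∑ i, m i * x i))
        = ((Fintype.card F : ℂ) *
            ((H ∩ Finset.univ.filter (fun x : Fin d → F => ∑ i, m i * x i = 0)).card : ℂ)
          - (H.card : ℂ))
          / ((Fintype.card F : ℂ) ^ (d + 1) - (Fintype.card F : ℂ) ^ d) :=
  stmt_1_general χ hχ d k P hhom H hH m
end

section
/- For every integer k ≥ 1 there is a constant C = C(k) > 0 such that the following holds for every finite field 𝔽_q: if P ∈ 𝔽_q[x₁,x₂,x₃] is a nonzero homogeneous polynomial of degree k whose variety H = {x ∈ 𝔽_q³ : P(x) = 0} contains no plane through the origin, then for every ξ ∈ 𝔽_q³ ∖ {0} one has |{(x,y) ∈ H × H : x + y = ξ}| ≤ C·q; equivalently, |H ∩ (H + ξ)| ≤ C·q, where H + ξ = {x + ξ : x ∈ H}. -/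
/-!
Both counts equal `|X|` for `X = {x | P x = 0 ∧ P (ξ - x) = 0}`, via `(x, y) ↦ x` and
`z ↦ ξ - z` (using `P (-x) = (-1) ^ k P x`). Pick `i` with `ξ i ≠ 0` and split
`x = (x i / ξ i) • ξ + π x` with `(π x) i = 0`. At most `q` points of `X` lie on the line `F ∙ ξ`.
For `v ≠ 0` with `v i = 0`, homogeneity gives `P (s • ξ + τ • v) = τ ^ k h (s / τ)` for `τ ≠ 0`,
where `h u = P (u • ξ + v)` has degree at most `k`; and `h ≠ 0` once `q > k + 1`, because `P`
does not vanish on the plane spanned by `ξ` and `v`, which is the kernel of `ξ ⨯₃ v`. So a point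
`s • ξ + τ • v` of `X` gives the pair of roots `(s / τ, (s - 1) / τ)` of `h`, and each such plane
holds at most `k²` of them. Every point of `X` off `F ∙ ξ` arises from exactly `q - 1` pairs
`(τ, v)`, whence `(q - 1) |X \ F ∙ ξ| ≤ (q² - 1) k²`. For `q ≤ k + 1` the bound `|X| ≤ q³` suffices.
-/

open Finset MvPolynomial

namespace MvPolynomial

section CommRing

variable {σ R : Type*} [CommRing R] {k : ℕ} {P : MvPolynomial σ R}

theorem IsHomogeneous.eval_smul_s4 (hP : P.IsHomogeneous k) (c : R) (x : σ → R) :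
    eval (c • x) P = c ^ k * eval x P := by
  rw [eval_eq, eval_eq, mul_sum]
  refine sum_congr rfl fun d hd => ?_
  simp only [Pi.smul_apply, smul_eq_mul, mul_pow, prod_mul_distrib, prod_pow_eq_pow_sum,
    ← hP.degree_eq_sum_deg_support hd]
  ring

theorem IsHomogeneous.eval_neg_eq_zero_iff (hP : P.IsHomogeneous k) (x : σ → R) :
    eval (-x) P = 0 ↔ eval x P = 0 := by
  rw [← neg_one_smul R x, hP.eval_smul_s4, (isUnit_neg_one.pow k).mul_right_eq_zero]

noncomputable def restrictLine (P : MvPolynomial σ R) (w₁ w₂ : σ → R) : Polynomial R :=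
  aeval (fun j => Polynomial.C (w₁ j) * Polynomial.X + Polynomial.C (w₂ j)) P

theorem eval_restrictLine (P : MvPolynomial σ R) (w₁ w₂ : σ → R) (u : R) :
    (restrictLine P w₁ w₂).eval u = eval (u • w₁ + w₂) P := by
  induction P using MvPolynomial.induction_on with
  | C a => simp [restrictLine]
  | add p q hp hq => simp_all [restrictLine]
  | mul_X p j hp => simp_all [restrictLine]; ring

theorem natDegree_restrictLine_le (P : MvPolynomial σ R) (w₁ w₂ : σ → R) :
    (restrictLine P w₁ w₂).natDegree ≤ P.totalDegree := by
  unfold restrictLine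
  simpa using aeval_natDegree_le P le_rfl _ fun _ => Polynomial.natDegree_linear_le

variable [Fintype σ] [DecidableEq σ] [Fintype R] [DecidableEq R]

noncomputable def zeroSplittings (P : MvPolynomial σ R) (ξ : σ → R) : Finset (σ → R) :=
  {x | eval x P = 0 ∧ eval (ξ - x) P = 0}

theorem card_filter_add_eq_card_zeroSplittings {H : Finset (σ → R)}
    (hH : ∀ x, x ∈ H ↔ eval x P = 0) (ξ : σ → R) :
    #{p ∈ H ×ˢ H | p.1 + p.2 = ξ} = #(zeroSplittings P ξ) := by
  refine card_nbij' Prod.fst (fun x => (x, ξ - x)) ?_ ?_ ?_ ?_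
  · rintro ⟨x, y⟩ hxy
    simp only [coe_filter, mem_product, Set.mem_ofPred_eq] at hxy
    obtain ⟨⟨hx, hy⟩, rfl⟩ := hxy
    simpa [zeroSplittings, ← hH] using ⟨hx, hy⟩
  · intro x hx
    simp only [zeroSplittings, coe_filter, mem_univ, true_and, Set.mem_ofPred_eq] at hx
    simp [hH, hx]
  · rintro ⟨x, y⟩ hxy
    simp only [coe_filter, mem_product, Set.mem_ofPred_eq] at hxy
    simp [← hxy.2]
  · intro x _
    rfl

theorem IsHomogeneous.card_inter_image_add_eq_card_zeroSplittings (hP : P.IsHomogeneous k)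
    {H : Finset (σ → R)} (hH : ∀ x, x ∈ H ↔ eval x P = 0) (ξ : σ → R) :
    #(H ∩ H.image (fun x => x + ξ)) = #(zeroSplittings P ξ) := by
  refine card_nbij' (ξ - ·) (ξ - ·) ?_ ?_ (fun z _ => sub_sub_cancel ξ z)
    (fun x _ => sub_sub_cancel ξ x)
  · intro z hz
    simp only [coe_inter, coe_image, Set.mem_inter_iff, mem_coe, Set.mem_image] at hz
    obtain ⟨hz, w, hw, rfl⟩ := hz
    simp only [zeroSplittings, coe_filter, mem_univ, true_and, Set.mem_ofPred_eq]
    rw [sub_add_cancel_right, sub_neg_eq_add, add_comm, hP.eval_neg_eq_zero_iff, ← hH, ← hH]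
    exact ⟨hw, hz⟩
  · intro x hx
    simp only [zeroSplittings, coe_filter, mem_univ, true_and, Set.mem_ofPred_eq] at hx
    simp only [coe_inter, coe_image, Set.mem_inter_iff, mem_coe, Set.mem_image]
    exact ⟨(hH _).2 hx.2, -x, (hH _).2 ((hP.eval_neg_eq_zero_iff x).2 hx.1), neg_add_eq_sub x ξ⟩

end CommRing

section Field

variable {σ F : Type*} [Field F] {k : ℕ} {P : MvPolynomial σ F}

theorem IsHomogeneous.eval_smul_add_smul (hP : P.IsHomogeneous k) (ξ v : σ → F) (s : F)
    {τ : F} (hτ : τ ≠ 0) :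
    eval (s • ξ + τ • v) P = τ ^ k * (restrictLine P ξ v).eval (s / τ) := by
  rw [eval_restrictLine, ← hP.eval_smul_s4, smul_add, smul_smul, mul_div_cancel₀ _ hτ]

theorem IsHomogeneous.isRoot_restrictLine (hP : P.IsHomogeneous k) {ξ v : σ → F} {s τ : F}
    (hτ : τ ≠ 0) (h : eval (s • ξ + τ • v) P = 0) : (restrictLine P ξ v).IsRoot (s / τ) := by
  rwa [hP.eval_smul_add_smul ξ v s hτ, mul_eq_zero, or_iff_right (pow_ne_zero k hτ)] at h

theorem IsHomogeneous.restrictLine_ne_zero [Fintype F] (hP : P.IsHomogeneous k)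
    (hq : k + 1 < Fintype.card F) {ξ v : σ → F} (hplane : ∃ s t : F, eval (s • ξ + t • v) P ≠ 0) :
    restrictLine P ξ v ≠ 0 := by
  classical
  obtain ⟨s, t, hst⟩ := hplane
  intro h0
  -- `τ ↦ P (s • ξ + τ • v)` has degree `≤ k` and vanishes at the `q - 1 > k` values `τ ≠ 0`
  have hg : restrictLine P v (s • ξ) = 0 := by
    refine Polynomial.eq_zero_of_natDegree_lt_card_of_eval_eq_zero' _ (univ.erase 0)
      (fun τ hτ => ?_) ?_
    · rw [eval_restrictLine, add_comm, hP.eval_smul_add_smul ξ v s (ne_of_mem_erase hτ), h0,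
        Polynomial.eval_zero, mul_zero]
    · have := (natDegree_restrictLine_le P v (s • ξ)).trans hP.totalDegree_le
      rw [card_erase_of_mem (mem_univ 0), card_univ]
      omega
  apply hst
  rw [add_comm, ← eval_restrictLine, hg, Polynomial.eval_zero]

def coordProj (ξ : σ → F) (i : σ) (x : σ → F) : σ → F := x - (x i / ξ i) • ξ

theorem coordProj_apply_self {ξ : σ → F} {i : σ} (hξ : ξ i ≠ 0) (x : σ → F) :
    coordProj ξ i x i = 0 := by
  simp [coordProj, div_mul_cancel₀ _ hξ]

theorem smul_add_coordProj (ξ : σ → F) (i : σ) (x : σ → F) :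
    (x i / ξ i) • ξ + coordProj ξ i x = x :=
  add_sub_cancel _ _

theorem linearIndependent_pair_of_apply_eq_zero {ξ v : σ → F} {i : σ} (hξ : ξ i ≠ 0)
    (hv : v i = 0) (hv₀ : v ≠ 0) : LinearIndependent F ![ξ, v] := by
  refine LinearIndependent.pair_iff.2 fun s t hst => ?_
  obtain rfl : s = 0 := by simpa [hv, hξ] using congrFun hst i
  exact ⟨rfl, by simpa [hv₀] using hst⟩

variable [Fintype σ] [DecidableEq σ] [Fintype F] [DecidableEq F]

noncomputable def lineSplittings (P : MvPolynomial σ F) (ξ v : σ → F) : Finset (F × F) :=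
  {p | p.2 ≠ 0 ∧ p.1 • ξ + p.2 • v ∈ zeroSplittings P ξ}

theorem IsHomogeneous.card_lineSplittings_le (hP : P.IsHomogeneous k) {ξ v : σ → F}
    (hv : restrictLine P ξ v ≠ 0) : #(lineSplittings P ξ v) ≤ k ^ 2 := by
  set R : Finset F := {u | (restrictLine P ξ v).IsRoot u}
  have hR : #R ≤ k := by
    refine (Polynomial.card_le_degree_of_subset_roots fun u hu => ?_).trans
      ((natDegree_restrictLine_le P ξ v).trans hP.totalDegree_le)
    exact (Polynomial.mem_roots hv).2 (mem_filter.1 hu).2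
  calc #(lineSplittings P ξ v) ≤ #(R ×ˢ R) := by
        refine card_le_card_of_injOn (fun p => (p.1 / p.2, (p.1 - 1) / p.2)) ?_ ?_
        · rintro ⟨s, τ⟩ hp
          simp only [lineSplittings, zeroSplittings, coe_filter, mem_filter, mem_univ, true_and,
            Set.mem_ofPred_eq] at hp
          obtain ⟨hτ, h₁, h₂⟩ := hp
          have hξ : ξ - (s • ξ + τ • v) = (1 - s) • ξ + (-τ) • v := by module
          rw [hξ] at h₂
          have h₂' := hP.isRoot_restrictLine (neg_ne_zero.2 hτ) h₂
          rw [div_neg, ← neg_div, neg_sub] at h₂'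
          simp only [R, coe_product, coe_filter, Set.mem_prod, mem_univ, true_and,
            Set.mem_ofPred_eq]
          exact ⟨hP.isRoot_restrictLine hτ h₁, h₂'⟩
        · rintro ⟨s, τ⟩ hp ⟨s', τ'⟩ - h
          simp only [lineSplittings, coe_filter, mem_univ, true_and, Set.mem_ofPred_eq] at hp
          simp only [Prod.mk.injEq] at h
          -- the two roots differ by `τ⁻¹`
          have hτ : τ⁻¹ = τ'⁻¹ := by
            have := congrArg₂ (· - ·) h.1 h.2
            simp only [← sub_div, sub_sub_cancel, one_div] at this
            exact this
          rw [inv_inj] at hτ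
          subst hτ
          rw [(div_left_inj' hp.1).1 h.1]
    _ = #R ^ 2 := by rw [card_product, sq]
    _ ≤ k ^ 2 := Nat.pow_le_pow_left hR 2

omit [DecidableEq σ] in
theorem card_filter_coordProj_eq_zero_le (s : Finset (σ → F)) (ξ : σ → F) (i : σ) :
    #{x ∈ s | coordProj ξ i x = 0} ≤ Fintype.card F := by
  refine (card_le_card fun x hx => ?_).trans (card_image_le (s := univ) (f := (· • ξ)))
  rw [mem_filter] at hx
  rw [← smul_add_coordProj ξ i x, hx.2, add_zero]
  exact mem_image_of_mem _ (mem_univ _)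

theorem card_filter_inv_smul_coordProj_eq_le (ξ : σ → F) (i : σ) (v : σ → F) :
    #{p ∈ zeroSplittings P ξ ×ˢ univ.erase (0 : F) | p.2⁻¹ • coordProj ξ i p.1 = v} ≤
      #(lineSplittings P ξ v) := by
  have hx : ∀ p ∈ {p ∈ zeroSplittings P ξ ×ˢ univ.erase (0 : F) | p.2⁻¹ • coordProj ξ i p.1 = v},
      (p.1 i / ξ i) • ξ + p.2 • v = p.1 ∧ p.1 ∈ zeroSplittings P ξ ∧ p.2 ≠ 0 := by
    rintro ⟨x, τ⟩ hp
    simp only [mem_filter, mem_product, mem_erase] at hp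
    obtain ⟨⟨hx, hτ, -⟩, rfl⟩ := hp
    exact ⟨by rw [smul_inv_smul₀ hτ, smul_add_coordProj], hx, hτ⟩
  refine card_le_card_of_injOn (fun p : (σ → F) × F => (p.1 i / ξ i, p.2)) (fun p hp => ?_)
    fun p hp p' hp' h => ?_
  · obtain ⟨hxv, hx, hτ⟩ := hx p hp
    simp only [lineSplittings, coe_filter, mem_univ, true_and, Set.mem_ofPred_eq]
    rw [hxv]
    exact ⟨hτ, hx⟩
  · simp only [Prod.mk.injEq] at h
    refine Prod.ext ?_ h.2
    rw [← (hx p hp).1, ← (hx p' hp').1, h.1, h.2]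

theorem IsHomogeneous.card_filter_coordProj_ne_zero_mul_le (hP : P.IsHomogeneous k)
    (hq : k + 1 < Fintype.card F) {ξ : σ → F} {i : σ} (hξ : ξ i ≠ 0)
    (hplane : ∀ v : σ → F, v i = 0 → v ≠ 0 → ∃ s t : F, eval (s • ξ + t • v) P ≠ 0) :
    #{x ∈ zeroSplittings P ξ | coordProj ξ i x ≠ 0} * (Fintype.card F - 1) ≤
      k ^ 2 * (Fintype.card F ^ (Fintype.card σ - 1) - 1) := by
  set X₁ := {x ∈ zeroSplittings P ξ | coordProj ξ i x ≠ 0}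
  set T : Finset (σ → F) := ({v | v i = 0} : Finset (σ → F)).erase 0
  have hT : #T = Fintype.card F ^ (Fintype.card σ - 1) - 1 := by
    rw [card_erase_of_mem (by simp), ← Fintype.piFinset_univ,
      Fintype.card_filter_piFinset_const_eq_of_mem _ _ (mem_univ 0), card_univ]
  -- double counting: `x ∈ X₁` is `(x i / ξ i) • ξ + τ • (τ⁻¹ • coordProj ξ i x)` for all `τ ≠ 0`
  calc #X₁ * (Fintype.card F - 1) = #(X₁ ×ˢ univ.erase (0 : F)) := by
        rw [card_product, card_erase_of_mem (mem_univ 0), card_univ]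
    _ ≤ k ^ 2 * #T := by
        refine card_le_mul_card_image_of_maps_to (f := fun p => p.2⁻¹ • coordProj ξ i p.1)
          ?_ _ fun v hv => ?_
        · rintro ⟨x, τ⟩ hp
          simp only [X₁, mem_product, mem_filter, mem_erase] at hp
          simp only [T, mem_erase, mem_filter, mem_univ, true_and, Pi.smul_apply,
            coordProj_apply_self hξ, smul_zero]
          exact ⟨smul_ne_zero (inv_ne_zero hp.2.1) hp.1.2, trivial⟩
        · simp only [T, mem_erase, mem_filter, mem_univ, true_and] at hv
          calc _ ≤ _ := card_le_card (filter_subset_filter _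
                  (product_subset_product (filter_subset _ _) subset_rfl))
            _ ≤ _ := card_filter_inv_smul_coordProj_eq_le ξ i v
            _ ≤ k ^ 2 := hP.card_lineSplittings_le
                (hP.restrictLine_ne_zero hq (hplane v hv.2 hv.1))
    _ = _ := by rw [hT]

end Field

end MvPolynomial

open Matrix

theorem mem_span_pair_of_cross_dotProduct_eq_zero {F : Type*} [Field F] {ξ v x : Fin 3 → F}
    (h : LinearIndependent F ![ξ, v]) (hx : ξ ⨯₃ v ⬝ᵥ x = 0) :
    x ∈ Submodule.span F {ξ, v} := by
  by_contra hx'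
  have hli : LinearIndependent F ![x, ξ, v] :=
    linearIndependent_finCons.2 ⟨h, by rwa [range_cons_cons_empty]⟩
  have hdet : IsUnit (det ![x, ξ, v]) :=
    (isUnit_iff_isUnit_det _).1 (linearIndependent_rows_iff_isUnit.1 hli)
  rw [← triple_product_eq_det, dotProduct_comm, hx] at hdet
  exact not_isUnit_zero hdet

namespace MvPolynomial

variable {F : Type*} [Field F] {k : ℕ} {P : MvPolynomial (Fin 3) F}

theorem exists_eval_smul_add_smul_ne_zero
    (hplane : ∀ m : Fin 3 → F, m ≠ 0 → ∃ x, m ⬝ᵥ x = 0 ∧ eval x P ≠ 0) {ξ v : Fin 3 → F}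
    (h : LinearIndependent F ![ξ, v]) : ∃ s t : F, eval (s • ξ + t • v) P ≠ 0 := by
  obtain ⟨x, hx, hPx⟩ := hplane _ (crossProduct_ne_zero_iff_linearIndependent.2 h)
  obtain ⟨s, t, rfl⟩ := Submodule.mem_span_pair.1 (mem_span_pair_of_cross_dotProduct_eq_zero h hx)
  exact ⟨s, t, hPx⟩

theorem IsHomogeneous.card_zeroSplittings_le [Fintype F] [DecidableEq F] (hP : P.IsHomogeneous k)
    (hplane : ∀ m : Fin 3 → F, m ≠ 0 → ∃ x, m ⬝ᵥ x = 0 ∧ eval x P ≠ 0) {ξ : Fin 3 → F}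
    (hξ : ξ ≠ 0) : #(zeroSplittings P ξ) ≤ 2 * (k + 1) ^ 2 * Fintype.card F := by
  set q := Fintype.card F
  rcases le_or_gt q (k + 1) with hq | hq
  · calc #(zeroSplittings P ξ) ≤ q ^ 3 := by simpa [q] using card_le_univ (zeroSplittings P ξ)
      _ ≤ 2 * (k + 1) ^ 2 * q := by nlinarith [Nat.mul_le_mul hq hq]
  obtain ⟨i, hξi⟩ : ∃ i, ξ i ≠ 0 := Function.ne_iff.1 hξ
  have h₀ := card_filter_coordProj_eq_zero_le (zeroSplittings P ξ) ξ i
  have h₁ := hP.card_filter_coordProj_ne_zero_mul_le hq hξi fun v hvi hv =>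
    exists_eval_smul_add_smul_ne_zero hplane (linearIndependent_pair_of_apply_eq_zero hξi hvi hv)
  have h₁' : #{x ∈ zeroSplittings P ξ | coordProj ξ i x ≠ 0} ≤ k ^ 2 * (q + 1) := by
    have hq2 : q ^ (Fintype.card (Fin 3) - 1) - 1 = (q + 1) * (q - 1) := by
      simpa using Nat.sq_sub_sq q 1
    rw [hq2, ← mul_assoc] at h₁
    exact Nat.le_of_mul_le_mul_right h₁ (by omega)
  rw [← card_filter_add_card_filter_not (fun x => coordProj ξ i x = 0)]
  nlinarith

end MvPolynomial

theorem stmt_4_general (k : ℕ) :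
    ∃ C : ℝ, 0 < C ∧
      ∀ (F : Type) [Field F] [Fintype F] [DecidableEq F]
        (P : MvPolynomial (Fin 3) F), P ≠ 0 → P.IsHomogeneous k →
        ∀ H : Finset (Fin 3 → F), (∀ x, x ∈ H ↔ MvPolynomial.eval x P = 0) →
        (¬ ∃ m : Fin 3 → F, m ≠ 0 ∧
            (Finset.univ.filter (fun x : Fin 3 → F => ∑ i, m i * x i = 0)) ⊆ H) →
        ∀ ξ : Fin 3 → F, ξ ≠ 0 →
          ((((H ×ˢ H).filter (fun p => p.1 + p.2 = ξ)).card : ℝ)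
              ≤ C * (Fintype.card F : ℝ))
          ∧ (((H ∩ H.image (fun x => x + ξ)).card : ℝ)
              ≤ C * (Fintype.card F : ℝ)) := by
  refine ⟨2 * (k + 1) ^ 2, by positivity, fun F _ _ _ P _ hP H hH hnoplane ξ hξ => ?_⟩
  have hplane : ∀ m : Fin 3 → F, m ≠ 0 → ∃ x, m ⬝ᵥ x = 0 ∧ eval x P ≠ 0 := by
    intro m hm
    by_contra! h
    exact hnoplane ⟨m, hm, fun x hx => (hH x).2 (h x (mem_filter.1 hx).2)⟩
  have hX : (#(zeroSplittings P ξ) : ℝ) ≤ 2 * (k + 1) ^ 2 * Fintype.card F := by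
    exact_mod_cast hP.card_zeroSplittings_le hplane hξ
  rw [card_filter_add_eq_card_zeroSplittings hH, hP.card_inter_image_add_eq_card_zeroSplittings hH]
  exact ⟨hX, hX⟩

/-- For every `k ≥ 1` there is `C = C(k) > 0` such that for every finite field
`𝔽_q` and every nonzero homogeneous polynomial `P` of degree `k` in three variables whose
variety `H = {P = 0}` contains no plane through the origin, for every `ξ ≠ 0` one has
`|{(x,y) ∈ H × H : x + y = ξ}| ≤ C·q`; equivalently `|H ∩ (H + ξ)| ≤ C·q`. -/
theorem stmt_4 (k : ℕ) (hk : 1 ≤ k) :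
    ∃ C : ℝ, 0 < C ∧
      ∀ (F : Type) [Field F] [Fintype F] [DecidableEq F]
        (P : MvPolynomial (Fin 3) F), P ≠ 0 → P.IsHomogeneous k →
        ∀ H : Finset (Fin 3 → F), (∀ x, x ∈ H ↔ MvPolynomial.eval x P = 0) →
        (¬ ∃ m : Fin 3 → F, m ≠ 0 ∧
            (Finset.univ.filter (fun x : Fin 3 → F => ∑ i, m i * x i = 0)) ⊆ H) →
        ∀ ξ : Fin 3 → F, ξ ≠ 0 →
          ((((H ×ˢ H).filter (fun p => p.1 + p.2 = ξ)).card : ℝ)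
              ≤ C * (Fintype.card F : ℝ))
          ∧ (((H ∩ H.image (fun x => x + ξ)).card : ℝ)
              ≤ C * (Fintype.card F : ℝ)) :=
  stmt_4_general k
end

section
/- For every integer d ≥ 2 and constants c₁, c₂, A > 0 there is a constant C > 0 such that the following holds for every finite field 𝔽_q with nontrivial additive character χ: if V ⊆ 𝔽_q^d satisfies c₁·q^{d−1} ≤ |V| ≤ c₂·q^{d−1} and |{(x,y) ∈ V × V : x + y = ξ}| ≤ A·q^{d−2} for every ξ ∈ 𝔽_q^d ∖ {0}, then for every function f : V → ℂ one has the L²–L⁴ extension estimate ( Σ_{m∈𝔽_q^d} | |V|^{−1} Σ_{x∈V} χ(m·x) f(x) |⁴ )^{1/4} ≤ C · ( |V|^{−1} Σ_{x∈V} |f(x)|² )^{1/2}. -/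
/-!
Squaring the extension turns it into a Fourier transform: `((f dσ)^∨(m))² = |V|⁻² Ĝ(m)` with
`G(ξ) = ∑_{x, y ∈ V, x + y = ξ} f x f y`, so by Plancherel `‖(f dσ)^∨‖₄⁴ = q^d |V|⁻⁴ ∑_ξ |G ξ|²`.
For `ξ ≠ 0`, Cauchy–Schwarz on the fibre `{x + y = ξ}` and the bound `A q^(d-2)` on its size give
`∑_{ξ ≠ 0} |G ξ|² ≤ A q^(d-2) (∑ |f|²)²`, while `|G 0| ≤ ∑ |f|²` by AM–GM. Since `d ≥ 2`, this is
at most `(1 + A) q^(2d-2) (∑ |f|²)²`, and `|V| ≥ c₁ q^(d-1)` turns `q^(2d-2)` into `|V|² / c₁²`.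
-/

open Finset

section PairsWithSum

variable {α R : Type*} [DecidableEq α]

def pairsWithSum [Add α] (V : Finset α) (ξ : α) : Finset (α × α) :=
  (V ×ˢ V).filter fun p => p.1 + p.2 = ξ

def convSelf [Add α] [CommSemiring R] (V : Finset α) (f : α → R) (ξ : α) : R :=
  ∑ p ∈ pairsWithSum V ξ, f p.1 * f p.2

lemma sum_sum_pairsWithSum [Add α] [Fintype α] {M : Type*} [AddCommMonoid M] (V : Finset α)
    (g : α → α × α → M) :
    ∑ ξ, ∑ p ∈ pairsWithSum V ξ, g ξ p = ∑ p ∈ V ×ˢ V, g (p.1 + p.2) p := by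
  rw [← sum_fiberwise (V ×ˢ V) (fun p => p.1 + p.2)]
  refine sum_congr rfl fun ξ _ => sum_congr rfl fun p hp => ?_
  rw [(mem_filter.mp hp).2]

lemma sq_sum_addChar_mul [AddMonoid α] [Fintype α] [CommSemiring R] (ψ : AddChar α R)
    (V : Finset α) (f : α → R) :
    (∑ x ∈ V, ψ x * f x) ^ 2 = ∑ ξ, ψ ξ * convSelf V f ξ := by
  simp only [convSelf, mul_sum]
  rw [sum_sum_pairsWithSum (g := fun ξ p => ψ ξ * (f p.1 * f p.2))]
  rw [sq, sum_mul_sum, sum_product]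
  refine sum_congr rfl fun x _ => sum_congr rfl fun y _ => ?_
  rw [AddChar.map_add_eq_mul]
  ring

lemma sq_norm_convSelf_le [Add α] [SeminormedCommRing R] (V : Finset α) (f : α → R) (ξ : α) :
    ‖convSelf V f ξ‖ ^ 2
      ≤ #(pairsWithSum V ξ) * ∑ p ∈ pairsWithSum V ξ, ‖f p.1‖ ^ 2 * ‖f p.2‖ ^ 2 := by
  calc ‖convSelf V f ξ‖ ^ 2 ≤ (∑ p ∈ pairsWithSum V ξ, ‖f p.1‖ * ‖f p.2‖) ^ 2 := by
        gcongr
        exact (norm_sum_le _ _).trans (sum_le_sum fun p _ => norm_mul_le _ _)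
    _ ≤ #(pairsWithSum V ξ) * ∑ p ∈ pairsWithSum V ξ, (‖f p.1‖ * ‖f p.2‖) ^ 2 :=
        sq_sum_le_card_mul_sum_sq
    _ = _ := by simp_rw [mul_pow]

variable [AddGroup α] [SeminormedCommRing R]

lemma sum_pairsWithSum_fst_le (V : Finset α) (ξ : α) {g : α → ℝ} (hg : ∀ x, 0 ≤ g x) :
    ∑ p ∈ pairsWithSum V ξ, g p.1 ≤ ∑ x ∈ V, g x := by
  have hinj : Set.InjOn Prod.fst (pairsWithSum V ξ : Set (α × α)) := by
    intro p hp r hr h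
    simp only [pairsWithSum, coe_filter, Set.mem_ofPred_eq] at hp hr
    exact Prod.ext h (add_left_cancel (a := p.1) (by rw [hp.2, h, hr.2]))
  rw [← sum_image hinj]
  refine sum_le_sum_of_subset_of_nonneg ?_ fun x _ _ => hg x
  intro x hx
  obtain ⟨p, hp, rfl⟩ := mem_image.mp hx
  exact (mem_product.mp (mem_filter.mp hp).1).1

lemma sum_pairsWithSum_snd_le (V : Finset α) (ξ : α) {g : α → ℝ} (hg : ∀ x, 0 ≤ g x) :
    ∑ p ∈ pairsWithSum V ξ, g p.2 ≤ ∑ x ∈ V, g x := by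
  have hinj : Set.InjOn Prod.snd (pairsWithSum V ξ : Set (α × α)) := by
    intro p hp r hr h
    simp only [pairsWithSum, coe_filter, Set.mem_ofPred_eq] at hp hr
    exact Prod.ext (add_right_cancel (b := p.2) (by rw [hp.2, h, hr.2])) h
  rw [← sum_image hinj]
  refine sum_le_sum_of_subset_of_nonneg ?_ fun x _ _ => hg x
  intro x hx
  obtain ⟨p, hp, rfl⟩ := mem_image.mp hx
  exact (mem_product.mp (mem_filter.mp hp).1).2

lemma norm_convSelf_le (V : Finset α) (f : α → R) (ξ : α) :
    ‖convSelf V f ξ‖ ≤ ∑ x ∈ V, ‖f x‖ ^ 2 := by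
  calc ‖convSelf V f ξ‖ ≤ ∑ p ∈ pairsWithSum V ξ, ‖f p.1‖ * ‖f p.2‖ :=
        (norm_sum_le _ _).trans (sum_le_sum fun p _ => norm_mul_le _ _)
    _ ≤ ∑ p ∈ pairsWithSum V ξ, (‖f p.1‖ ^ 2 + ‖f p.2‖ ^ 2) / 2 :=
        sum_le_sum fun p _ => by nlinarith [sq_nonneg (‖f p.1‖ - ‖f p.2‖)]
    _ = ((∑ p ∈ pairsWithSum V ξ, ‖f p.1‖ ^ 2) + ∑ p ∈ pairsWithSum V ξ, ‖f p.2‖ ^ 2) / 2 := by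
        rw [← sum_div, sum_add_distrib]
    _ ≤ ∑ x ∈ V, ‖f x‖ ^ 2 := by
        have := sum_pairsWithSum_fst_le V ξ fun x => sq_nonneg ‖f x‖
        have := sum_pairsWithSum_snd_le V ξ fun x => sq_nonneg ‖f x‖
        linarith

lemma sum_sq_norm_convSelf_le [Fintype α] (V : Finset α) (f : α → R) {N : ℝ} (hN0 : 0 ≤ N)
    (hN : ∀ ξ ≠ 0, (#(pairsWithSum V ξ) : ℝ) ≤ N) :
    ∑ ξ, ‖convSelf V f ξ‖ ^ 2 ≤ (1 + N) * (∑ x ∈ V, ‖f x‖ ^ 2) ^ 2 := by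
  set S := ∑ x ∈ V, ‖f x‖ ^ 2
  set T : α → ℝ := fun ξ => ∑ p ∈ pairsWithSum V ξ, ‖f p.1‖ ^ 2 * ‖f p.2‖ ^ 2
  have hT : ∀ ξ, 0 ≤ T ξ := fun ξ => sum_nonneg fun p _ => by positivity
  have hT_sum : ∑ ξ, T ξ = S ^ 2 := by
    rw [sum_sum_pairsWithSum (g := fun _ p => ‖f p.1‖ ^ 2 * ‖f p.2‖ ^ 2), sum_product, sq,
      sum_mul_sum]
  have h_zero : ‖convSelf V f 0‖ ^ 2 ≤ S ^ 2 :=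
    pow_le_pow_left₀ (norm_nonneg _) (norm_convSelf_le V f 0) 2
  have h_ne_zero : ∑ ξ ∈ univ.erase 0, ‖convSelf V f ξ‖ ^ 2 ≤ N * S ^ 2 :=
    calc ∑ ξ ∈ univ.erase 0, ‖convSelf V f ξ‖ ^ 2 ≤ ∑ ξ ∈ univ.erase 0, N * T ξ :=
          sum_le_sum fun ξ hξ => (sq_norm_convSelf_le V f ξ).trans <|
            mul_le_mul_of_nonneg_right (hN ξ (ne_of_mem_erase hξ)) (hT ξ)
      _ ≤ ∑ ξ, N * T ξ :=
          sum_le_sum_of_subset_of_nonneg (erase_subset _ _) fun ξ _ _ => mul_nonneg hN0 (hT ξ)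
      _ = N * S ^ 2 := by rw [← mul_sum, hT_sum]
  rw [← add_sum_erase _ _ (mem_univ 0)]
  linarith

end PairsWithSum

section DotProduct

variable {ι F : Type*} [Fintype ι]

def dotProductChar [CommRing F] {M : Type*} [CommMonoid M] (χ : AddChar F M) (m : ι → F) :
    AddChar (ι → F) M :=
  χ.compAddMonoidHom (AddMonoidHom.mk' (m ⬝ᵥ ·) (dotProduct_add m))

@[simp]
lemma dotProductChar_apply [CommRing F] {M : Type*} [CommMonoid M] (χ : AddChar F M) (m x : ι → F) :
    dotProductChar χ m x = χ (m ⬝ᵥ x) := rfl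

variable [DecidableEq ι] [Field F] [Fintype F] [DecidableEq F]

lemma sum_addChar_dotProduct {R : Type*} [CommRing R] [IsDomain R] {χ : AddChar F R}
    (hχ : χ ≠ 1) (x : ι → F) :
    ∑ m : ι → F, χ (m ⬝ᵥ x) = if x = 0 then (Fintype.card F : R) ^ Fintype.card ι else 0 := by
  split_ifs with hx
  · simp [hx]
  obtain ⟨i, hi⟩ := Function.ne_iff.mp hx
  obtain ⟨t, ht⟩ := DFunLike.ne_iff.mp (AddChar.IsPrimitive.of_ne_one hχ hi)
  have hψ : dotProductChar χ x ≠ 1 := by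
    refine DFunLike.ne_iff.mpr ⟨Pi.single i t, ?_⟩
    simpa [dotProduct_comm x, mul_comm] using ht
  simpa [dotProduct_comm] using AddChar.sum_eq_zero_of_ne_one hψ

lemma sum_sq_norm_sum_addChar_dotProduct {χ : AddChar F ℂ} (hχ : χ ≠ 1) (G : (ι → F) → ℂ) :
    ∑ m : ι → F, ‖∑ ξ, χ (m ⬝ᵥ ξ) * G ξ‖ ^ 2
      = (Fintype.card F : ℝ) ^ Fintype.card ι * ∑ ξ, ‖G ξ‖ ^ 2 := by
  have h_term (m ξ η : ι → F) :
      χ (m ⬝ᵥ ξ) * G ξ * (starRingEnd ℂ (χ (m ⬝ᵥ η)) * starRingEnd ℂ (G η))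
        = χ (m ⬝ᵥ (ξ - η)) * (G ξ * starRingEnd ℂ (G η)) := by
    rw [dotProduct_sub, sub_eq_add_neg, AddChar.map_add_eq_mul, AddChar.map_neg_eq_conj]
    ring
  apply Complex.ofReal_injective
  push_cast
  simp_rw [← Complex.mul_conj', map_sum, map_mul, sum_mul_sum, h_term, mul_sum]
  rw [sum_comm]
  refine sum_congr rfl fun ξ _ => ?_
  rw [sum_comm]
  simp_rw [← sum_mul, sum_addChar_dotProduct hχ, sub_eq_zero, ite_mul, zero_mul, sum_ite_eq]
  simp only [mem_univ, if_true]

lemma sum_norm_pow_four_sum_addChar_dotProduct_le {χ : AddChar F ℂ} (hχ : χ ≠ 1)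
    (V : Finset (ι → F)) (f : (ι → F) → ℂ) {N : ℝ} (hN0 : 0 ≤ N)
    (hN : ∀ ξ ≠ 0, (#(pairsWithSum V ξ) : ℝ) ≤ N) :
    ∑ m : ι → F, ‖∑ x ∈ V, χ (m ⬝ᵥ x) * f x‖ ^ 4
      ≤ (Fintype.card F : ℝ) ^ Fintype.card ι * (1 + N) * (∑ x ∈ V, ‖f x‖ ^ 2) ^ 2 := by
  have h_sq (m : ι → F) : ‖∑ x ∈ V, χ (m ⬝ᵥ x) * f x‖ ^ 4
      = ‖∑ ξ, χ (m ⬝ᵥ ξ) * convSelf V f ξ‖ ^ 2 := by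
    have h := sq_sum_addChar_mul (dotProductChar χ m) V f
    simp only [dotProductChar_apply] at h
    rw [← h, norm_pow, ← pow_mul]
  simp_rw [h_sq]
  rw [sum_sq_norm_sum_addChar_dotProduct hχ, mul_assoc]
  gcongr
  exact sum_sq_norm_convSelf_le V f hN0 hN

end DotProduct

lemma rpow_one_div_four_le_of_le_mul_sq {X K Y : ℝ} (hX : 0 ≤ X) (hK : 0 ≤ K) (hY : 0 ≤ Y)
    (h : X ≤ K * Y ^ 2) : X ^ ((1 : ℝ) / 4) ≤ K ^ ((1 : ℝ) / 4) * Y ^ ((1 : ℝ) / 2) := by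
  calc X ^ ((1 : ℝ) / 4) ≤ (K * Y ^ 2) ^ ((1 : ℝ) / 4) := Real.rpow_le_rpow hX h (by norm_num)
    _ = K ^ ((1 : ℝ) / 4) * Y ^ ((1 : ℝ) / 2) := by
      rw [Real.mul_rpow hK (by positivity), ← Real.rpow_natCast, ← Real.rpow_mul hY]
      norm_num

lemma pow_mul_one_add_le {q A c v : ℝ} {d : ℕ} (hd : 2 ≤ d) (hq : 1 ≤ q) (hA : 0 ≤ A)
    (hc : 0 < c) (hv : c * q ^ (d - 1) ≤ v) :
    q ^ d * (1 + A * q ^ (d - 2)) ≤ (1 + A) / c ^ 2 * v ^ 2 := by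
  have h_exp : d + (d - 2) = 2 * (d - 1) := by omega
  calc q ^ d * (1 + A * q ^ (d - 2)) = q ^ d + A * q ^ (2 * (d - 1)) := by
        rw [← h_exp, pow_add]; ring
    _ ≤ q ^ (2 * (d - 1)) + A * q ^ (2 * (d - 1)) := by
        gcongr
        omega
    _ = (1 + A) / c ^ 2 * (c * q ^ (d - 1)) ^ 2 := by
        field_simp
        ring
    _ ≤ (1 + A) / c ^ 2 * v ^ 2 := by
        gcongr

theorem stmt_5_general (d : ℕ) (hd : 2 ≤ d) (c₁ c₂ A : ℝ) (hc₁ : 0 < c₁)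
    (hA : 0 < A) :
    ∃ C : ℝ, 0 < C ∧
      ∀ (F : Type) [Field F] [Fintype F] [DecidableEq F] (χ : AddChar F ℂ), χ ≠ 1 →
        ∀ V : Finset (Fin d → F),
          c₁ * (Fintype.card F : ℝ) ^ (d - 1) ≤ V.card →
          (V.card : ℝ) ≤ c₂ * (Fintype.card F : ℝ) ^ (d - 1) →
          (∀ ξ : Fin d → F, ξ ≠ 0 →
            (((V ×ˢ V).filter (fun p => p.1 + p.2 = ξ)).card : ℝ)
              ≤ A * (Fintype.card F : ℝ) ^ (d - 2)) →
          ∀ f : (Fin d → F) → ℂ,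
            (∑ m : Fin d → F,
                ‖(V.card : ℂ)⁻¹ * ∑ x ∈ V, χ (∑ i, m i * x i) * f x‖ ^ 4)
                ^ ((1 : ℝ) / 4)
              ≤ C * ((V.card : ℝ)⁻¹ * ∑ x ∈ V, ‖f x‖ ^ 2) ^ ((1 : ℝ) / 2) := by
  refine ⟨((1 + A) / c₁ ^ 2) ^ ((1 : ℝ) / 4), by positivity, ?_⟩
  intro F _ _ _ χ hχ V hV_lower _ hV_pairs f
  set q := (Fintype.card F : ℝ)
  set v := ((V.card : ℕ) : ℝ)
  set S := ∑ x ∈ V, ‖f x‖ ^ 2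
  have hv : 0 < v := lt_of_lt_of_le (by positivity) hV_lower
  have hq : 1 ≤ q := Nat.one_le_cast.mpr Fintype.card_pos
  have hL4 := sum_norm_pow_four_sum_addChar_dotProduct_le hχ V f (by positivity) hV_pairs
  rw [Fintype.card_fin] at hL4
  refine rpow_one_div_four_le_of_le_mul_sq (by positivity) (by positivity) (by positivity) ?_
  calc ∑ m : Fin d → F, ‖(#V : ℂ)⁻¹ * ∑ x ∈ V, χ (m ⬝ᵥ x) * f x‖ ^ 4
      = v⁻¹ ^ 4 * ∑ m : Fin d → F, ‖∑ x ∈ V, χ (m ⬝ᵥ x) * f x‖ ^ 4 := by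
        rw [mul_sum]
        refine sum_congr rfl fun m _ => ?_
        rw [norm_mul, mul_pow, norm_inv, Complex.norm_natCast]
    _ ≤ v⁻¹ ^ 4 * (q ^ d * (1 + A * q ^ (d - 2)) * S ^ 2) :=
        mul_le_mul_of_nonneg_left hL4 (by positivity)
    _ ≤ v⁻¹ ^ 4 * ((1 + A) / c₁ ^ 2 * v ^ 2 * S ^ 2) := by
        gcongr v⁻¹ ^ 4 * (?_ * _)
        exact pow_mul_one_add_le hd hq hA.le hc₁ hV_lower
    _ = (1 + A) / c₁ ^ 2 * (v⁻¹ * S) ^ 2 := by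
        field_simp

/-- For every `d ≥ 2` and constants `c₁, c₂, A > 0` there is `C > 0` such that
for every finite field `𝔽_q` with nontrivial additive character `χ`: if `V ⊆ 𝔽_q^d` satisfies
`c₁·q^{d−1} ≤ |V| ≤ c₂·q^{d−1}` and `|{(x,y) ∈ V × V : x + y = ξ}| ≤ A·q^{d−2}` for every
`ξ ≠ 0`, then for every `f : V → ℂ` one has the `L²–L⁴` extension estimate
`‖(f dσ)^∨‖_{L⁴(𝔽_q^d,dm)} ≤ C ‖f‖_{L²(V,dσ)}`. -/
theorem stmt_5 (d : ℕ) (hd : 2 ≤ d) (c₁ c₂ A : ℝ) (hc₁ : 0 < c₁) (hc₂ : 0 < c₂)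
    (hA : 0 < A) :
    ∃ C : ℝ, 0 < C ∧
      ∀ (F : Type) [Field F] [Fintype F] [DecidableEq F] (χ : AddChar F ℂ), χ ≠ 1 →
        ∀ V : Finset (Fin d → F),
          c₁ * (Fintype.card F : ℝ) ^ (d - 1) ≤ V.card →
          (V.card : ℝ) ≤ c₂ * (Fintype.card F : ℝ) ^ (d - 1) →
          (∀ ξ : Fin d → F, ξ ≠ 0 →
            (((V ×ˢ V).filter (fun p => p.1 + p.2 = ξ)).card : ℝ)
              ≤ A * (Fintype.card F : ℝ) ^ (d - 2)) →
          ∀ f : (Fin d → F) → ℂ,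
            (∑ m : Fin d → F,
                ‖(V.card : ℂ)⁻¹ * ∑ x ∈ V, χ (∑ i, m i * x i) * f x‖ ^ 4)
                ^ ((1 : ℝ) / 4)
              ≤ C * ((V.card : ℝ)⁻¹ * ∑ x ∈ V, ‖f x‖ ^ 2) ^ ((1 : ℝ) / 2) :=
  stmt_5_general d hd c₁ c₂ A hc₁ hA
end

section
/- Let 𝔽_q be a finite field whose characteristic is greater than c, where c ≥ 2 is an integer, and let a₁, a₂, a₃ ∈ 𝔽_q ∖ {0}. Then the homogeneous variety H₀ = {x ∈ 𝔽_q³ : a₁x₁^c + a₂x₂^c + a₃x₃^c = 0} contains no plane through the origin: there is no m ∈ 𝔽_q³ ∖ {0} with Π_m ⊆ H₀. -/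
/-!
Solving `m ⬝ x = 0` for a coordinate where `m` does not vanish parametrises `Π_m` by the two
other coordinates `s, t`, and `Π_m ⊆ H₀` becomes an identity
`A s^c + B t^c + D (μ s + ν t)^c = 0` on `F²` with `A, B, D ≠ 0`. Specialising to `t = 0` and
`s = 0` gives `A = -D μ^c` and `B = -D ν^c`, which turns the identity into
`(u + v)^c = u^c + v^c` for all `u, v`. But then `n^c = n` for `n = 0, …, c`, so `X^c - X` would
have `c + 1` distinct roots (as `char F > c`) while having degree `c`.
-/

open Polynomial

section

variable {ι F : Type*} [Fintype ι] [CommSemiring F]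

def linearHyperplane (m : ι → F) : Set (ι → F) := {x | ∑ i, m i * x i = 0}

def diagonalHypersurface (a : ι → F) (c : ℕ) : Set (ι → F) := {x | ∑ i, a i * x i ^ c = 0}

theorem mem_linearHyperplane_comp_equiv (σ : ι ≃ ι) {m x : ι → F} :
    x ∈ linearHyperplane (m ∘ σ) ↔ x ∘ σ.symm ∈ linearHyperplane m := by
  simp [linearHyperplane, ← Equiv.sum_comp σ (fun j => m j * x (σ.symm j))]

theorem mem_diagonalHypersurface_comp_equiv (σ : ι ≃ ι) {a x : ι → F} {c : ℕ} :
    x ∈ diagonalHypersurface (a ∘ σ) c ↔ x ∘ σ.symm ∈ diagonalHypersurface a c := by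
  simp [diagonalHypersurface, ← Equiv.sum_comp σ (fun j => a j * x (σ.symm j) ^ c)]

theorem linearHyperplane_comp_equiv_subset (σ : ι ≃ ι) {m a : ι → F} {c : ℕ}
    (h : linearHyperplane m ⊆ diagonalHypersurface a c) :
    linearHyperplane (m ∘ σ) ⊆ diagonalHypersurface (a ∘ σ) c := fun _ hx =>
  (mem_diagonalHypersurface_comp_equiv σ).2 (h ((mem_linearHyperplane_comp_equiv σ).1 hx))

end

theorem add_pow_eq_of_forall_eq_zero {F : Type*} [Field F] {c : ℕ} (hc : c ≠ 0)
    {A B D μ ν : F} (hA : A ≠ 0) (hB : B ≠ 0) (hD : D ≠ 0)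
    (h : ∀ s t, A * s ^ c + B * t ^ c + D * (μ * s + ν * t) ^ c = 0) (u v : F) :
    (u + v) ^ c = u ^ c + v ^ c := by
  have hA' : A = -D * μ ^ c := by
    linear_combination (by simpa [zero_pow hc] using h 1 0 : A + D * μ ^ c = 0)
  have hB' : B = -D * ν ^ c := by
    linear_combination (by simpa [zero_pow hc] using h 0 1 : B + D * ν ^ c = 0)
  have hμ : μ ≠ 0 := by rintro rfl; exact hA (by simpa [zero_pow hc] using hA')
  have hν : ν ≠ 0 := by rintro rfl; exact hB (by simpa [zero_pow hc] using hB')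
  have key := h (u / μ) (v / ν)
  rw [hA', hB', mul_assoc, mul_assoc, ← mul_pow, ← mul_pow, mul_div_cancel₀ u hμ,
    mul_div_cancel₀ v hν] at key
  exact mul_left_cancel₀ hD (by linear_combination key)

theorem exists_add_pow_ne_add_pow {F : Type*} [Field F] {c : ℕ} (hc : 2 ≤ c)
    (hchar : c < ringChar F) : ∃ u v : F, (u + v) ^ c ≠ u ^ c + v ^ c := by
  by_contra! hadd
  have hfix : ∀ n : ℕ, (n : F) ^ c = n := by
    intro n
    induction n with
    | zero => simp [zero_pow (by omega : c ≠ 0)]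
    | succ k ih => push_cast; rw [hadd, ih, one_pow]
  have hinj : Function.Injective (fun n : Fin (c + 1) => ((n : ℕ) : F)) := fun x y hxy =>
    Fin.ext <| CharP.natCast_injOn_Iio (R := F) (ringChar F) (by grind) (by grind) hxy
  refine FiniteField.X_pow_card_sub_X_ne_zero F (by omega : 1 < c)
    (eq_zero_of_natDegree_lt_card_of_eval_eq_zero _ hinj (fun n => ?_) ?_)
  · simp [hfix]
  · rw [FiniteField.X_pow_card_sub_X_natDegree_eq F (by omega), Fintype.card_fin]; omega

theorem not_linearHyperplane_subset_diagonalHypersurface {F : Type*} [Field F] {c : ℕ}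
    (hc : 2 ≤ c) (hchar : c < ringChar F) {a m : Fin 3 → F} (ha : ∀ i, a i ≠ 0)
    (hm : m 0 ≠ 0) : ¬ linearHyperplane m ⊆ diagonalHypersurface a c := by
  intro hsub
  obtain ⟨u, v, huv⟩ := exists_add_pow_ne_add_pow hc hchar
  refine huv <| add_pow_eq_of_forall_eq_zero (by omega) (A := a 1 * m 0 ^ c)
    (B := a 2 * m 0 ^ c) (D := a 0 * (-1) ^ c) (μ := m 1) (ν := m 2)
    (by simp [ha, hm]) (by simp [ha, hm]) (by simp [ha]) (fun s t => ?_) u v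
  have hx : ![-(m 1 * s + m 2 * t), m 0 * s, m 0 * t] ∈ linearHyperplane m := by
    simp only [linearHyperplane, Set.mem_ofPred_eq, Fin.sum_univ_three, Matrix.cons_val_zero,
      Matrix.cons_val_one, Matrix.cons_val_two, Matrix.tail_cons, Matrix.head_cons]
    ring
  have hH := hsub hx
  simp only [diagonalHypersurface, Set.mem_ofPred_eq, Fin.sum_univ_three, Matrix.cons_val_zero,
    Matrix.cons_val_one, Matrix.cons_val_two, Matrix.tail_cons, Matrix.head_cons] at hH
  rw [neg_pow, mul_pow, mul_pow] at hH
  linear_combination hH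

theorem stmt_12_general {F : Type} [Field F]
    (c : ℕ) (hc : 2 ≤ c) (hchar : c < ringChar F)
    (a : Fin 3 → F) (ha : ∀ i, a i ≠ 0) :
    ¬ ∃ m : Fin 3 → F, m ≠ 0 ∧
        {x : Fin 3 → F | ∑ i, m i * x i = 0}
          ⊆ {x : Fin 3 → F | ∑ i, a i * x i ^ c = 0} := by
  rintro ⟨m, hm, hsub⟩
  obtain ⟨k, hk⟩ := Function.ne_iff.1 hm
  exact not_linearHyperplane_subset_diagonalHypersurface hc hchar (fun i => ha _)
    (m := m ∘ Equiv.swap 0 k) (by simpa using hk) (linearHyperplane_comp_equiv_subset _ hsub)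

/-- Let `𝔽_q` be a finite field whose characteristic is greater than `c`, where
`c ≥ 2`, and let `a₁, a₂, a₃ ∈ 𝔽_q ∖ {0}`.  Then the homogeneous variety
`H₀ = {x ∈ 𝔽_q³ : a₁x₁^c + a₂x₂^c + a₃x₃^c = 0}` contains no plane through the origin:
there is no `m ≠ 0` with `Π_m ⊆ H₀`. -/
theorem stmt_12 {F : Type} [Field F] [Fintype F]
    (c : ℕ) (hc : 2 ≤ c) (hchar : c < ringChar F)
    (a : Fin 3 → F) (ha : ∀ i, a i ≠ 0) :
    ¬ ∃ m : Fin 3 → F, m ≠ 0 ∧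
        {x : Fin 3 → F | ∑ i, m i * x i = 0}
          ⊆ {x : Fin 3 → F | ∑ i, a i * x i ^ c = 0} :=
  stmt_12_general c hc hchar a ha
end

section
/- Let 𝔽_q be a finite field whose characteristic is greater than c, where c ≥ 2 is an integer, let χ : 𝔽_q → ℂ be a nontrivial additive character, let a₁, a₂, a₃ ∈ 𝔽_q ∖ {0}, and let H₀ = {x ∈ 𝔽_q³ : a₁x₁^c + a₂x₂^c + a₃x₃^c = 0}. Then for every m ∈ 𝔽_q³ ∖ {0} one has |Σ_{x∈H₀} χ(m·x)| ≤ c·q²/(q − 1); in particular |Ĥ₀(m)| ≲ q^{−2}. -/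
/-!
`H₀` is a cone: it is stable under `x ↦ r • x` for `r ≠ 0`, so the sum `S = ∑_{x ∈ H₀} χ(m·x)`
does not change when `m` is replaced by `r m`. Averaging over `r ∈ 𝔽_q^×` and using the
orthogonality of `χ` gives `(q - 1) S = q N - |H₀|` with `N = |H₀ ∩ {m·x = 0}|`, and both
`q N` and `|H₀|` lie in `[0, c q²]`. Indeed `|H₀| ≤ c q²` since every fibre over `(x₂, x₃)`
has at most `c` points. On the plane `m·x = 0` the form becomes a binary form
`b₀u^c + b₁v^c + b₂(lu + kv)^c`; each row `u = const` has at most `c` zeros, unless the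
coefficient `b₁ + b₂k^c` of `v^c` vanishes, in which case the row `u = 0` may be full but
every other row has at most `c - 1` zeros, the coefficient of `v^{c-1}` being `c b₂ l k^{c-1} u`
(this is where `char 𝔽_q > c` enters). Hence `N ≤ q + (q - 1)(c - 1) ≤ c q`.
-/

open Polynomial Finset

theorem natCast_ne_zero_of_lt_ringChar {R : Type*} [NonAssocRing R] {n : ℕ} (hn : n ≠ 0)
    (h : n < ringChar R) : (n : R) ≠ 0 :=
  fun h0 => (Nat.le_of_dvd (Nat.pos_of_ne_zero hn) ((ringChar.spec R n).1 h0)).not_gt h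

theorem card_filter_prod_eq_sum {α β : Type*} [Fintype α] [Fintype β] (P : α × β → Prop)
    [DecidablePred P] :
    #{p | P p} = ∑ a, #{b | P (a, b)} := by
  simp only [card_filter, Fintype.sum_prod_type]

theorem sum_apply_smul_of_smul_mem {G E M : Type*} [GroupWithZero G] [MulAction G E]
    [AddCommMonoid M] {H : Finset E} (hH : ∀ r : G, r ≠ 0 → ∀ x ∈ H, r • x ∈ H) {r : G}
    (hr : r ≠ 0) (f : E → M) :
    ∑ x ∈ H, f (r • x) = ∑ x ∈ H, f x :=
  sum_nbij' (r • ·) (r⁻¹ • ·) (hH r hr) (hH r⁻¹ (inv_ne_zero hr))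
    (fun x _ => inv_smul_smul₀ hr x) (fun x _ => smul_inv_smul₀ hr x) fun _ _ => rfl

section FiniteField

variable {F : Type*} [Field F] [Fintype F] [DecidableEq F]

theorem card_filter_eval_eq_zero_le {p : F[X]} {n : ℕ} (hp : p ≠ 0) (hn : p.natDegree ≤ n) :
    #{y | p.eval y = 0} ≤ n :=
  (card_le_degree_of_subset_roots fun y hy => by simpa [mem_roots hp] using hy).trans hn

theorem card_roots_add_mul_pow_add_mul_pow_le {c : ℕ} (hc : c ≠ 0) (w b₁ b₂ l k : F)
    (hlead : b₁ + b₂ * k ^ c ≠ 0) :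
    #{v | w + b₁ * v ^ c + b₂ * (l + k * v) ^ c = 0} ≤ c := by
  set p : F[X] := C w + C b₁ * X ^ c + C b₂ * (C l + C k * X) ^ c
  have hlin : (C l + C k * X).natDegree ≤ 1 := by compute_degree
  have hdeg : p.natDegree ≤ c := by unfold p; compute_degree
  have hcoeff : p.coeff c = b₁ + b₂ * k ^ c := by
    have hpow := coeff_pow_of_natDegree_le (m := c) hlin
    rw [mul_one] at hpow
    simp [p, coeff_C, hc, hpow]
  have hp : p ≠ 0 := fun h => hlead (by rw [← hcoeff, h, coeff_zero])
  simpa [p] using card_filter_eval_eq_zero_le hp hdeg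

theorem card_roots_add_mul_add_pow_sub_pow_le {c : ℕ} (hc : 2 ≤ c) (hcF : (c : F) ≠ 0) {w b : F}
    (hw : w ≠ 0) (hb : b ≠ 0) (l : F) :
    #{y | w + b * ((y + l) ^ c - y ^ c) = 0} ≤ c - 1 := by
  rcases eq_or_ne l 0 with rfl | hl
  · simp [hw]
  set p : F[X] := C w + C b * ((X + C l) ^ c - X ^ c)
  have hcoeff : ∀ j, p.coeff j
      = (if j = 0 then w else 0) + b * (l ^ (c - j) * c.choose j - if j = c then 1 else 0) := by
    intro j
    simp [p, coeff_C, coeff_X_add_C_pow, coeff_X_pow]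
  have hdeg : p.natDegree ≤ c - 1 := by
    refine natDegree_le_iff_coeff_eq_zero.2 fun j hj => ?_
    rcases eq_or_lt_of_le (show c ≤ j by omega) with rfl | hlt
    · simp [hcoeff, show c ≠ 0 by omega]
    · simp [hcoeff, Nat.choose_eq_zero_of_lt hlt, show j ≠ 0 by omega, hlt.ne']
  have hp : p ≠ 0 := by
    intro h
    have := hcoeff (c - 1)
    rw [h, coeff_zero, if_neg (by omega), if_neg (by omega), Nat.sub_sub_self (by omega),
      Nat.choose_symm (by omega), Nat.choose_one_right] at this
    simp [hb, hl, hcF] at this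
  simpa [p] using card_filter_eval_eq_zero_le hp hdeg

theorem card_roots_add_mul_pow_add_mul_pow_le_of_leading_eq_zero {c : ℕ} (hc : 2 ≤ c)
    (hcF : (c : F) ≠ 0) {w b₁ b₂ k : F} (hw : w ≠ 0) (hb₂ : b₂ ≠ 0) (hk : k ≠ 0) (l : F)
    (hlead : b₁ + b₂ * k ^ c = 0) :
    #{v | w + b₁ * v ^ c + b₂ * (l + k * v) ^ c = 0} ≤ c - 1 := by
  -- with `y = k v` the hypothesis reads `b₁ v ^ c = -b₂ y ^ c`
  refine (card_le_card_of_injOn (k * ·) (fun v hv => ?_) (mul_right_injective₀ hk).injOn).trans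
    (card_roots_add_mul_add_pow_sub_pow_le hc hcF hw hb₂ l)
  simp only [mem_coe, mem_filter, mem_univ, true_and] at hv ⊢
  linear_combination hv - v ^ c * hlead

theorem card_zeros_binary_form_le {c : ℕ} (hc : 2 ≤ c) (hcF : (c : F) ≠ 0) {b₀ b₁ b₂ : F}
    (hb₀ : b₀ ≠ 0) (hb₁ : b₁ ≠ 0) (hb₂ : b₂ ≠ 0) (l k : F) :
    #{p : F × F | b₀ * p.1 ^ c + b₁ * p.2 ^ c + b₂ * (l * p.1 + k * p.2) ^ c = 0}
      ≤ c * Fintype.card F := by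
  rw [card_filter_prod_eq_sum]
  by_cases hlead : b₁ + b₂ * k ^ c = 0
  · have hk : k ≠ 0 := by
      rintro rfl
      simp [zero_pow (by omega : c ≠ 0), hb₁] at hlead
    have hrow : ∀ u ∈ univ.erase (0 : F),
        #{v | b₀ * u ^ c + b₁ * v ^ c + b₂ * (l * u + k * v) ^ c = 0} ≤ c - 1 := fun u hu =>
      card_roots_add_mul_pow_add_mul_pow_le_of_leading_eq_zero hc hcF
        (mul_ne_zero hb₀ (pow_ne_zero c (ne_of_mem_erase hu))) hb₂ hk _ hlead
    rw [← add_sum_erase _ _ (mem_univ 0)]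
    calc _ ≤ Fintype.card F + (Fintype.card F - 1) * (c - 1) := by
          refine add_le_add (card_le_univ _) ((sum_le_card_nsmul _ _ _ hrow).trans_eq ?_)
          rw [card_erase_of_mem (mem_univ _), card_univ, smul_eq_mul]
      _ ≤ Fintype.card F + Fintype.card F * (c - 1) := by gcongr; exact Nat.sub_le _ _
      _ = c * Fintype.card F := by
          rw [add_comm, ← Nat.mul_add_one, Nat.sub_add_cancel (by omega), mul_comm]
  · calc _ ≤ ∑ _u : F, c := sum_le_sum fun u _ =>
          card_roots_add_mul_pow_add_mul_pow_le (by omega) (b₀ * u ^ c) b₁ b₂ (l * u) k hlead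
      _ = c * Fintype.card F := by rw [sum_const, card_univ, smul_eq_mul, mul_comm]

theorem card_diagonal_zeros_inter_plane_le {c : ℕ} (hc : 2 ≤ c) (hcF : (c : F) ≠ 0)
    {b : Fin 3 → F} (hb : ∀ i, b i ≠ 0) {n : Fin 3 → F} {j : Fin 3} (hj : n j ≠ 0) :
    #{x : Fin 3 → F | ∑ i, b i * x i ^ c = 0 ∧ n ⬝ᵥ x = 0} ≤ c * Fintype.card F := by
  set s := j.succAbove
  have hsolve : ∀ x : Fin 3 → F, n ⬝ᵥ x = 0 →
      x j = -n (s 0) / n j * x (s 0) + -n (s 1) / n j * x (s 1) := by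
    intro x hx
    rw [dotProduct, Fin.sum_univ_succAbove _ j, Fin.sum_univ_two] at hx
    field_simp
    linear_combination hx
  refine (card_le_card_of_injOn (fun x => (x (s 0), x (s 1))) ?_ ?_).trans
    (card_zeros_binary_form_le hc hcF (hb (s 0)) (hb (s 1)) (hb j) (-n (s 0) / n j)
      (-n (s 1) / n j))
  · intro x hx
    simp only [mem_coe, mem_filter, mem_univ, true_and] at hx ⊢
    rw [← hsolve x hx.2]
    rw [Fin.sum_univ_succAbove _ j, Fin.sum_univ_two] at hx
    linear_combination hx.1
  · intro x hx y hy hxy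
    simp only [mem_coe, mem_filter, mem_univ, true_and] at hx hy
    obtain ⟨h0, h1⟩ : x (s 0) = y (s 0) ∧ x (s 1) = y (s 1) := Prod.ext_iff.1 hxy
    funext i
    obtain rfl | ⟨t, rfl⟩ := j.eq_self_or_eq_succAbove i
    · rw [hsolve x hx.2, hsolve y hy.2, h0, h1]
    · fin_cases t
      exacts [h0, h1]

theorem card_diagonal_zeros_le {d c : ℕ} (hc : c ≠ 0) {a : Fin (d + 1) → F} (ha : a 0 ≠ 0) :
    #{x : Fin (d + 1) → F | ∑ i, a i * x i ^ c = 0} ≤ c * Fintype.card F ^ d := by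
  refine (card_le_card_of_injOn (fun x => (Fin.tail x, x 0))
    (t := {p | (∑ i, a i.succ * p.1 i ^ c) + a 0 * p.2 ^ c = 0}) ?_ ?_).trans ?_
  · intro x hx
    simp only [mem_coe, mem_filter, mem_univ, true_and, Fin.sum_univ_succ, Fin.tail] at hx ⊢
    linear_combination hx
  · intro x _ y _ hxy
    obtain ⟨htail, h0⟩ : Fin.tail x = Fin.tail y ∧ x 0 = y 0 := Prod.ext_iff.1 hxy
    rw [← Fin.cons_self_tail x, ← Fin.cons_self_tail y, htail, h0]
  · rw [card_filter_prod_eq_sum]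
    calc _ ≤ ∑ _w : Fin d → F, c := sum_le_sum fun w _ => by
          simpa using card_roots_add_mul_pow_add_mul_pow_le hc (∑ i, a i.succ * w i ^ c)
            (a 0) 0 0 0 (by simpa using ha)
      _ = c * Fintype.card F ^ d := by
          rw [sum_const, card_univ, Fintype.card_fun, Fintype.card_fin, smul_eq_mul, mul_comm]

theorem card_sub_one_mul_sum_addChar_dotProduct {ι : Type*} [Fintype ι] {χ : AddChar F ℂ}
    (hχ : χ ≠ 1) {H : Finset (ι → F)} (hH : ∀ r : F, r ≠ 0 → ∀ x ∈ H, r • x ∈ H) (m : ι → F) :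
    ((Fintype.card F : ℂ) - 1) * ∑ x ∈ H, χ (m ⬝ᵥ x)
      = Fintype.card F * #{x ∈ H | m ⬝ᵥ x = 0} - #H := by
  have hline : ∀ t : F, ∑ r ∈ univ.erase 0, χ (r * t)
      = (if t = 0 then (Fintype.card F : ℂ) else 0) - 1 := by
    intro t
    rw [sum_erase_eq_sub (mem_univ 0), AddChar.sum_mulShift t (AddChar.IsPrimitive.of_ne_one hχ)]
    simp
  calc ((Fintype.card F : ℂ) - 1) * ∑ x ∈ H, χ (m ⬝ᵥ x)
      = ∑ r ∈ univ.erase (0 : F), ∑ x ∈ H, χ (m ⬝ᵥ x) := by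
        rw [sum_const, card_erase_of_mem (mem_univ _), card_univ, nsmul_eq_mul,
          Nat.cast_pred Fintype.card_pos]
    _ = ∑ r ∈ univ.erase (0 : F), ∑ x ∈ H, χ (m ⬝ᵥ (r • x)) :=
        sum_congr rfl fun r hr => (sum_apply_smul_of_smul_mem hH (ne_of_mem_erase hr) _).symm
    _ = ∑ x ∈ H, ∑ r ∈ univ.erase (0 : F), χ (r * m ⬝ᵥ x) := by
        rw [sum_comm]
        simp only [dotProduct_smul, smul_eq_mul]
    _ = ∑ x ∈ H, ((if m ⬝ᵥ x = 0 then (Fintype.card F : ℂ) else 0) - 1) :=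
        sum_congr rfl fun x _ => hline _
    _ = Fintype.card F * #{x ∈ H | m ⬝ᵥ x = 0} - #H := by
        rw [sum_sub_distrib, sum_ite, sum_const_zero, add_zero, sum_const, sum_const]
        simp [mul_comm]

theorem norm_sum_addChar_dotProduct_le {ι : Type*} [Fintype ι] {χ : AddChar F ℂ}
    (hχ : χ ≠ 1) {H : Finset (ι → F)} (hH : ∀ r : F, r ≠ 0 → ∀ x ∈ H, r • x ∈ H) (m : ι → F)
    {B : ℝ} (hzero : (Fintype.card F : ℝ) * #{x ∈ H | m ⬝ᵥ x = 0} ≤ B) (hcard : (#H : ℝ) ≤ B) :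
    ‖∑ x ∈ H, χ (m ⬝ᵥ x)‖ ≤ B / (Fintype.card F - 1) := by
  have hq : (1 : ℝ) < Fintype.card F := by exact_mod_cast Fintype.one_lt_card
  rw [le_div_iff₀ (sub_pos.2 hq), mul_comm]
  calc ((Fintype.card F : ℝ) - 1) * ‖∑ x ∈ H, χ (m ⬝ᵥ x)‖
      = |(Fintype.card F : ℝ) * #{x ∈ H | m ⬝ᵥ x = 0} - #H| := by
        have key := congrArg (‖·‖) (card_sub_one_mul_sum_addChar_dotProduct hχ hH m)
        rw [← Real.norm_eq_abs, ← Complex.norm_real, ← abs_of_pos (sub_pos.2 hq),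
          ← Real.norm_eq_abs, ← Complex.norm_real, ← norm_mul]
        push_cast
        exact key
    _ ≤ B := abs_sub_le_of_nonneg_of_le (by positivity) hzero (by positivity) hcard

end FiniteField

/-- Let `𝔽_q` be a finite field of characteristic greater than `c ≥ 2`,
`χ` a nontrivial additive character, `a₁, a₂, a₃ ≠ 0`, and
`H₀ = {x ∈ 𝔽_q³ : a₁x₁^c + a₂x₂^c + a₃x₃^c = 0}`.  Then for every `m ≠ 0` one has
`|Σ_{x∈H₀} χ(m·x)| ≤ c·q²/(q − 1)`; in particular `|Ĥ₀(m)| ≤ c·q²/(q³(q−1)) ≲ q^{−2}`. -/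
theorem stmt_13 {F : Type} [Field F] [Fintype F] [DecidableEq F]
    (c : ℕ) (hc : 2 ≤ c) (hchar : c < ringChar F)
    (χ : AddChar F ℂ) (hχ : χ ≠ 1)
    (a : Fin 3 → F) (ha : ∀ i, a i ≠ 0)
    (H : Finset (Fin 3 → F)) (hH : ∀ x, x ∈ H ↔ ∑ i, a i * x i ^ c = 0) :
    ∀ m : Fin 3 → F, m ≠ 0 →
      ‖∑ x ∈ H, χ (∑ i, m i * x i)‖
          ≤ (c : ℝ) * (Fintype.card F : ℝ) ^ 2 / ((Fintype.card F : ℝ) - 1)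
      ∧ ‖((Fintype.card F : ℂ))⁻¹ ^ 3 * ∑ x ∈ H, χ (-(∑ i, m i * x i))‖
          ≤ (c : ℝ) * (Fintype.card F : ℝ) ^ 2
              / ((Fintype.card F : ℝ) ^ 3 * ((Fintype.card F : ℝ) - 1)) := by
  have hcF : (c : F) ≠ 0 := natCast_ne_zero_of_lt_ringChar (by omega) hchar
  have hHeq : H = ({x | ∑ i, a i * x i ^ c = 0} : Finset (Fin 3 → F)) := by ext x; simp [hH]
  have hcone : ∀ r : F, r ≠ 0 → ∀ x ∈ H, r • x ∈ H := fun r _ x hx => by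
    simp only [hH, Pi.smul_apply, smul_eq_mul, mul_pow, mul_left_comm _ (r ^ c), ← mul_sum]
      at hx ⊢
    rw [hx, mul_zero]
  have hbound : ∀ m : Fin 3 → F, m ≠ 0 → ‖∑ x ∈ H, χ (m ⬝ᵥ x)‖
      ≤ c * (Fintype.card F : ℝ) ^ 2 / (Fintype.card F - 1) := by
    intro m hm
    obtain ⟨j, hj⟩ := Function.ne_iff.1 hm
    have hplane : #{x ∈ H | m ⬝ᵥ x = 0} ≤ c * Fintype.card F := by
      rw [hHeq, filter_filter]
      exact card_diagonal_zeros_inter_plane_le hc hcF ha hj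
    have hcard : #H ≤ c * Fintype.card F ^ 2 := hHeq ▸ card_diagonal_zeros_le (by omega) (ha 0)
    refine norm_sum_addChar_dotProduct_le hχ hcone m ?_ (by exact_mod_cast hcard)
    calc (Fintype.card F : ℝ) * #{x ∈ H | m ⬝ᵥ x = 0}
        ≤ Fintype.card F * (c * Fintype.card F) := by gcongr; exact_mod_cast hplane
      _ = c * Fintype.card F ^ 2 := by ring
  intro m hm
  refine ⟨hbound m hm, ?_⟩
  have hneg : ∀ x, -∑ i, m i * x i = (-m) ⬝ᵥ x := fun x => (neg_dotProduct m x).symm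
  simp_rw [hneg]
  rw [norm_mul, norm_pow, norm_inv, Complex.norm_natCast, inv_pow, inv_mul_eq_div,
    mul_comm (_ ^ 3), ← div_div]
  exact div_le_div_of_nonneg_right (hbound (-m) (neg_ne_zero.2 hm)) (by positivity)
end

section
/- Let 𝔽_q be a finite field of odd characteristic, χ : 𝔽_q → ℂ a nontrivial additive character, and V = {x ∈ 𝔽_q⁴ : x₁² + x₂² + x₃² + x₄² = 0}. Then for every m ∈ 𝔽_q⁴ ∖ {0}: if m₁² + m₂² + m₃² + m₄² = 0 then Σ_{x∈V} χ(m·x) = q(q − 1), while if m₁² + m₂² + m₃² + m₄² ≠ 0 then Σ_{x∈V} χ(m·x) = −q. In particular, there exist m ≠ 0 with |V̂(m)| = (q−1)/q³ ∼ q^{−2} = q^{−d/2}, so the Fourier decay of V in even dimension d = 4 is strictly worse than q^{−(d+1)/2}. -/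
/-!
Writing `q · 1[Q(x) = 0] = ∑ₜ χ(t Q(x))` with `Q(x) = ∑ xᵢ²` gives
`q ∑_{x∈V} χ(m·x) = ∑ₜ ∑ₓ χ(t Q(x) + m·x)`. For `t = 0` the inner sum vanishes as `m ≠ 0`.
For `t ≠ 0` it splits into four one-variable sums; completing the square, each is
`χ(-mᵢ²/4t) η(t) G` with `η` the quadratic character and `G` its Gauss sum, and
`(η(t) G)⁴ = (η(-1) q)² = q²`. So `q ∑_{x∈V} χ(m·x) = q² ∑_{t≠0} χ(-Q(m)/4t)`, and as
`t` runs over `F^×` so does `1/t`: the last sum is `q - 1` if `Q(m) = 0` and `-1` otherwise.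
-/

open Finset AddChar

namespace AddChar

variable {ι A M R : Type*}

lemma map_sum_eq_prod [AddCommMonoid A] [CommMonoid M] (ψ : AddChar A M) (s : Finset ι)
    (f : ι → A) : ψ (∑ i ∈ s, f i) = ∏ i ∈ s, ψ (f i) := by
  have := map_prod ψ.toMonoidHom (fun i ↦ Multiplicative.ofAdd (f i)) s
  rwa [← ofAdd_sum] at this

lemma sum_pi_map_sum [Fintype ι] [DecidableEq ι] {B : Type*} [Fintype B] [AddCommMonoid A]
    [CommSemiring R] (ψ : AddChar A R) (f : ι → B → A) :
    ∑ x : ι → B, ψ (∑ i, f i (x i)) = ∏ i, ∑ y, ψ (f i y) := by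
  simp only [map_sum_eq_prod]
  exact (Fintype.prod_sum fun i y ↦ ψ (f i y)).symm

end AddChar

lemma four_ne_zero_of_ringChar_ne_two {K : Type*} [Field K] (hK : ringChar K ≠ 2) :
    (4 : K) ≠ 0 := by
  simpa [show (4 : K) = 2 ^ 2 by norm_num] using Ring.two_ne_zero hK

section FiniteField

variable {F : Type*} [Field F] [Fintype F] {ψ : AddChar F ℂ}

lemma sum_addChar_mul_eq_zero (hψ : ψ.IsPrimitive) {t : F} (ht : t ≠ 0) :
    ∑ y, ψ (t * y) = 0 := by
  simpa using sum_eq_zero_of_ne_one (hψ ht)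

lemma sum_addChar_linear_eq_zero {ι : Type*} [Fintype ι] [DecidableEq ι] (hψ : ψ.IsPrimitive)
    {m : ι → F} (hm : m ≠ 0) : ∑ x : ι → F, ψ (∑ i, m i * x i) = 0 := by
  obtain ⟨i, hi⟩ := Function.ne_iff.mp hm
  rw [sum_pi_map_sum ψ fun i y ↦ m i * y]
  exact prod_eq_zero (mem_univ i) (sum_addChar_mul_eq_zero hψ hi)

lemma exists_ne_zero_sum_sq_eq_zero (hF : ringChar F ≠ 2) :
    ∃ m : Fin 4 → F, m ≠ 0 ∧ ∑ i, m i ^ 2 = 0 := by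
  obtain ⟨a, b, hab⟩ := FiniteField.exists_root_sum_quadratic
    (Polynomial.degree_X_pow 2) (Polynomial.degree_X_pow_add_C two_pos 1)
    (FiniteField.odd_card_of_char_ne_two hF)
  refine ⟨![a, b, 1, 0], fun h ↦ one_ne_zero (congrFun h 2), ?_⟩
  simp only [Polynomial.eval_add, Polynomial.eval_pow, Polynomial.eval_X,
    Polynomial.eval_C] at hab
  simp only [Fin.sum_univ_four, Matrix.cons_val]
  linear_combination hab

variable [DecidableEq F]

lemma sum_addChar_div (hψ : ψ.IsPrimitive) (c : F) :
    ∑ t, ψ (c / t) = if c = 0 then (Fintype.card F : ℂ) else 0 := by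
  simp_rw [div_eq_mul_inv, mul_comm c]
  rw [Fintype.sum_equiv (Equiv.inv F) (fun t ↦ ψ (t⁻¹ * c)) (fun s ↦ ψ (s * c))
    fun _ ↦ rfl, sum_mulShift c hψ]
  push_cast; rfl

lemma card_mul_sum_filter_eq_zero_eq_sum_addChar {α : Type*} [Fintype α] (hψ : ψ.IsPrimitive)
    (Q : α → F) (g : α → ℂ) :
    (Fintype.card F : ℂ) * ∑ x with Q x = 0, g x = ∑ t, ∑ x, ψ (t * Q x) * g x := by
  rw [sum_comm, sum_filter, mul_sum]
  refine sum_congr rfl fun x _ ↦ ?_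
  rw [← sum_mul, sum_mulShift (Q x) hψ]
  split_ifs <;> simp

variable (F) in
noncomputable def complexQuadraticChar : MulChar F ℂ :=
  (quadraticChar F).ringHomComp (Int.castRingHom ℂ)

local notation "η" => complexQuadraticChar F

lemma complexQuadraticChar_isQuadratic : (η).IsQuadratic :=
  (quadraticChar_isQuadratic F).comp _

lemma complexQuadraticChar_ne_one (hF : ringChar F ≠ 2) : η ≠ 1 :=
  (MulChar.ringHomComp_ne_one_iff (RingHom.injective_int _)).mpr (quadraticChar_ne_one hF)

lemma complexQuadraticChar_sq {t : F} (ht : t ≠ 0) : η t ^ 2 = 1 := by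
  rw [complexQuadraticChar, MulChar.ringHomComp_apply, ← map_pow, quadraticChar_sq_one ht,
    map_one]

lemma card_sqrts_eq_complexQuadraticChar_add_one (hF : ringChar F ≠ 2) (u : F) :
    (#{y | y ^ 2 = u} : ℂ) = η u + 1 := by
  have := quadraticChar_card_sqrts hF u
  rw [Set.toFinset_ofPred] at this
  simpa [complexQuadraticChar] using congrArg (Int.cast : ℤ → ℂ) this

lemma sum_addChar_mul_sq (hF : ringChar F ≠ 2) (hψ : ψ.IsPrimitive) {t : F} (ht : t ≠ 0) :
    ∑ y, ψ (t * y ^ 2) = η t * gaussSum η ψ := by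
  calc ∑ y, ψ (t * y ^ 2) = ∑ u, ∑ y with y ^ 2 = u, ψ (t * u) :=
        (sum_fiberwise' univ (· ^ 2) fun u ↦ ψ (t * u)).symm
    _ = ∑ u, (η u + 1) * ψ (t * u) := by simp [card_sqrts_eq_complexQuadraticChar_add_one hF]
    _ = gaussSum η (mulShift ψ t) + ∑ u, ψ (t * u) := by
        simp [gaussSum, add_mul, sum_add_distrib, mul_comm t]
    _ = η t * gaussSum η ψ := by
        rw [sum_addChar_mul_eq_zero hψ ht, add_zero, ← Units.val_mk0 ht, gaussSum_mulShift_eq,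
          complexQuadraticChar_isQuadratic.inv]

lemma sum_addChar_quadratic (hF : ringChar F ≠ 2) (hψ : ψ.IsPrimitive) {t : F} (ht : t ≠ 0)
    (b : F) : ∑ y, ψ (t * y ^ 2 + b * y) = ψ (-b ^ 2 / (4 * t)) * (η t * gaussSum η ψ) := by
  have h2 : (2 : F) ≠ 0 := Ring.two_ne_zero hF
  have h4 := four_ne_zero_of_ringChar_ne_two hF
  have hsquare (y : F) :
      t * (y - b / (2 * t)) ^ 2 + b * (y - b / (2 * t)) = -b ^ 2 / (4 * t) + t * y ^ 2 := by
    field_simp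
    ring
  rw [← (Equiv.subRight (b / (2 * t))).sum_comp]
  simp only [Equiv.subRight_apply, hsquare, map_add_eq_mul, ← mul_sum,
    sum_addChar_mul_sq hF hψ ht]

lemma sum_addChar_quadraticForm {ι : Type*} [Fintype ι] [DecidableEq ι] (hF : ringChar F ≠ 2)
    (hψ : ψ.IsPrimitive) {t : F} (ht : t ≠ 0) (m : ι → F) :
    ∑ x : ι → F, ψ (t * ∑ i, x i ^ 2 + ∑ i, m i * x i)
      = ψ (-(∑ i, m i ^ 2) / (4 * t)) * (η t * gaussSum η ψ) ^ Fintype.card ι := by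
  have hsplit (x : ι → F) :
      t * ∑ i, x i ^ 2 + ∑ i, m i * x i = ∑ i, (t * x i ^ 2 + m i * x i) := by
    rw [mul_sum, sum_add_distrib]
  simp only [hsplit, sum_pi_map_sum ψ fun i y ↦ t * y ^ 2 + m i * y,
    sum_addChar_quadratic hF hψ ht, prod_mul_distrib, prod_const, card_univ, ← map_sum_eq_prod,
    ← sum_div, sum_neg_distrib, mul_pow]

lemma gaussSum_pow_four (hF : ringChar F ≠ 2) (hψ : ψ.IsPrimitive) :
    gaussSum η ψ ^ 4 = (Fintype.card F : ℂ) ^ 2 := by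
  rw [show 4 = 2 * 2 by rfl, pow_mul, gaussSum_sq (complexQuadraticChar_ne_one hF)
    complexQuadraticChar_isQuadratic hψ, mul_pow,
    complexQuadraticChar_sq (neg_ne_zero.mpr one_ne_zero), one_mul]

lemma sum_addChar_quadraticForm_four (hF : ringChar F ≠ 2) (hψ : ψ.IsPrimitive)
    {m : Fin 4 → F} (hm : m ≠ 0) (t : F) :
    ∑ x : Fin 4 → F, ψ (t * ∑ i, x i ^ 2 + ∑ i, m i * x i)
      = (Fintype.card F : ℂ) ^ 2 * ψ (-(∑ i, m i ^ 2) / 4 / t)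
        - if t = 0 then (Fintype.card F : ℂ) ^ 2 else 0 := by
  -- at `t = 0` both sides vanish, the right one because `c / 0 = 0`
  rcases eq_or_ne t 0 with rfl | ht
  · simp [sum_addChar_linear_eq_zero hψ hm]
  · have hη : η t ^ 4 = 1 := by
      rw [show 4 = 2 * 2 by rfl, pow_mul, complexQuadraticChar_sq ht, one_pow]
    rw [if_neg ht, sub_zero, sum_addChar_quadraticForm hF hψ ht, Fintype.card_fin, mul_pow, hη,
      gaussSum_pow_four hF hψ, div_div, one_mul, mul_comm]

lemma sum_addChar_dot_nullCone (hF : ringChar F ≠ 2) (hψ : ψ.IsPrimitive)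
    {m : Fin 4 → F} (hm : m ≠ 0) :
    ∑ x : Fin 4 → F with ∑ i, x i ^ 2 = 0, ψ (∑ i, m i * x i)
      = Fintype.card F * ((if ∑ i, m i ^ 2 = 0 then (Fintype.card F : ℂ) else 0) - 1) := by
  have h4 := four_ne_zero_of_ringChar_ne_two hF
  have hq : (Fintype.card F : ℂ) ≠ 0 := Nat.cast_ne_zero.mpr Fintype.card_ne_zero
  refine mul_left_cancel₀ hq ?_
  calc (Fintype.card F : ℂ) * ∑ x : Fin 4 → F with ∑ i, x i ^ 2 = 0, ψ (∑ i, m i * x i)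
      = ∑ t, ∑ x : Fin 4 → F, ψ (t * ∑ i, x i ^ 2 + ∑ i, m i * x i) := by
        simp only [card_mul_sum_filter_eq_zero_eq_sum_addChar hψ, map_add_eq_mul]
    _ = (Fintype.card F : ℂ) ^ 2 * ∑ t, ψ (-(∑ i, m i ^ 2) / 4 / t)
          - (Fintype.card F : ℂ) ^ 2 := by
        rw [Fintype.sum_congr _ _ (sum_addChar_quadraticForm_four hF hψ hm), sum_sub_distrib,
          sum_ite_eq', if_pos (mem_univ _), mul_sum]
    _ = _ := by
        simp only [sum_addChar_div hψ, div_eq_zero_iff, neg_eq_zero, h4, or_false]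
        ring

end FiniteField

/-- Let `𝔽_q` be a finite field of odd characteristic, `χ` a nontrivial additive
character, and `V = {x ∈ 𝔽_q⁴ : x₁² + x₂² + x₃² + x₄² = 0}`.  Then for every `m ≠ 0`: if
`m₁² + m₂² + m₃² + m₄² = 0` then `Σ_{x∈V} χ(m·x) = q(q − 1)`, while if
`m₁² + m₂² + m₃² + m₄² ≠ 0` then `Σ_{x∈V} χ(m·x) = −q`.  In particular there exists `m ≠ 0`
with `|V̂(m)| = (q−1)/q³`, so the Fourier decay of `V` in even dimension `d = 4` is exactly of
order `q^{−d/2}`, strictly worse than `q^{−(d+1)/2}`. -/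
theorem stmt_15 {F : Type} [Field F] [Fintype F] [DecidableEq F]
    (hchar : ringChar F ≠ 2)
    (χ : AddChar F ℂ) (hχ : χ ≠ 1)
    (V : Finset (Fin 4 → F)) (hV : ∀ x, x ∈ V ↔ ∑ i, x i ^ 2 = 0) :
    (∀ m : Fin 4 → F, m ≠ 0 →
        ((∑ i, m i ^ 2 = 0 →
            ∑ x ∈ V, χ (∑ i, m i * x i)
              = (Fintype.card F : ℂ) * ((Fintype.card F : ℂ) - 1))
          ∧ (∑ i, m i ^ 2 ≠ 0 →
            ∑ x ∈ V, χ (∑ i, m i * x i) = -(Fintype.card F : ℂ))))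
    ∧ ∃ m : Fin 4 → F, m ≠ 0 ∧
        ‖((Fintype.card F : ℂ))⁻¹ ^ 4 * ∑ x ∈ V, χ (-(∑ i, m i * x i))‖
          = ((Fintype.card F : ℝ) - 1) / (Fintype.card F : ℝ) ^ 3 := by
  have hsum {m : Fin 4 → F} (hm : m ≠ 0) := sum_addChar_dot_nullCone hchar
    (IsPrimitive.of_ne_one hχ) hm
  obtain rfl : V = univ.filter fun x : Fin 4 → F ↦ ∑ i, x i ^ 2 = 0 := by ext x; simp [hV x]
  refine ⟨fun m hm ↦ ⟨fun hQ ↦ by rw [hsum hm, if_pos hQ],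
    fun hQ ↦ by rw [hsum hm, if_neg hQ]; ring⟩, ?_⟩
  obtain ⟨m, hm, hQ⟩ := exists_ne_zero_sum_sq_eq_zero hchar
  refine ⟨-m, neg_ne_zero.mpr hm, ?_⟩
  have hq : (1 : ℝ) ≤ Fintype.card F := Nat.one_le_cast.mpr Fintype.card_pos
  have hnorm : (Fintype.card F : ℂ)⁻¹ ^ 4 * (Fintype.card F * (Fintype.card F - 1))
      = (((Fintype.card F - 1) / Fintype.card F ^ 3 : ℝ) : ℂ) := by
    push_cast
    field_simp
  simp only [Pi.neg_apply, neg_mul, sum_neg_distrib, neg_neg]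
  rw [hsum hm, if_pos hQ, hnorm, Complex.norm_real, Real.norm_of_nonneg]
  exact div_nonneg (sub_nonneg.mpr hq) (by positivity)
end

section
/- Let 𝔽_q be a finite field of odd characteristic, χ : 𝔽_q → ℂ a nontrivial additive character, η the quadratic character of 𝔽_q, G = Σ_{t∈𝔽_q∖{0}} η(t)χ(t) the associated Gauss sum, and V = {x ∈ 𝔽_q³ : x₁² + x₂² + x₃² = 0}. Then for every m ∈ 𝔽_q³ ∖ {0} one has the exact identity Σ_{x∈V} χ(−m·x) = q^{−1} G³ Σ_{s∈𝔽_q∖{0}} η(s) χ( −(m₁² + m₂² + m₃²)/(4s) ). -/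
/-- Let `𝔽_q` be a finite field of odd characteristic, `χ` a nontrivial additive
character, `η` the quadratic character of `𝔽_q`, `G = Σ_{t≠0} η(t)χ(t)` the Gauss sum, and
`V = {x ∈ 𝔽_q³ : x₁² + x₂² + x₃² = 0}`.  Then for every `m ≠ 0` one has the exact identity
`Σ_{x∈V} χ(−m·x) = q^{−1}·G³·Σ_{s≠0} η(s)·χ( −(m₁² + m₂² + m₃²)/(4s) )`. -/
theorem stmt_16 {F : Type} [Field F] [Fintype F] [DecidableEq F]
    (hchar : ringChar F ≠ 2)
    (χ : AddChar F ℂ) (hχ : χ ≠ 1)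
    (η : F → ℂ) (hη : ∀ t, η t = ((quadraticChar F t : ℤ) : ℂ))
    (G : ℂ) (hG : G = ∑ t ∈ Finset.univ.erase (0 : F), η t * χ t)
    (V : Finset (Fin 3 → F)) (hV : ∀ x, x ∈ V ↔ ∑ i, x i ^ 2 = 0) :
    ∀ m : Fin 3 → F, m ≠ 0 →
      ∑ x ∈ V, χ (-(∑ i, m i * x i))
        = (Fintype.card F : ℂ)⁻¹ * G ^ 3 *
            ∑ s ∈ Finset.univ.erase (0 : F), η s * χ (-(∑ i, m i ^ 2) / (4 * s)) := by
  intro m hm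
  have hprim : χ.IsPrimitive := AddChar.IsPrimitive.of_ne_one hχ
  have h2 : (2 : F) ≠ 0 := Ring.two_ne_zero hchar
  have h4 : (4 : F) ≠ 0 := by
    have : (4 : F) = 2 * 2 := by norm_num
    rw [this]; exact mul_ne_zero h2 h2
  have hη0 : η 0 = 0 := by rw [hη]; simp
  have hηmul : ∀ a b : F, η (a * b) = η a * η b := by
    intro a b; simp only [hη, map_mul]; push_cast; ring
  have hηsq : ∀ s : F, s ≠ 0 → η s * η s = 1 := by
    intro s hs
    have := quadraticChar_sq_one (F := F) hs
    rw [hη, ← Int.cast_mul, pow_two] at *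
    rw [this]; norm_num
  have hcard : ∀ t : F, ((Finset.univ.filter (fun u : F => u ^ 2 = t)).card : ℂ)
      = η t + 1 := by
    intro t
    have := quadraticChar_card_sqrts hchar t
    rw [Set.toFinset_setOf] at this
    rw [hη]
    exact_mod_cast congrArg (fun z : ℤ => (z : ℂ)) this
  have hlin : ∀ s : F, s ≠ 0 → ∑ t : F, χ (s * t) = 0 := by
    intro s hs
    have := AddChar.sum_mulShift (ψ := χ) s hprim
    rw [if_neg hs] at this
    simpa [mul_comm] using this
  have hshift : ∀ s : F, s ≠ 0 → ∑ t : F, η t * χ (s * t) = η s * ∑ t : F, η t * χ t := by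
    intro s hs
    rw [Finset.mul_sum]
    refine Fintype.sum_bijective (fun t : F => s * t) ?_ _ _ ?_
    · exact (Equiv.mulLeft₀ s hs).bijective
    · intro u
      show η u * χ (s * u) = η s * (η (s * u) * χ (s * u))
      rw [hηmul, show η s * (η s * η u * χ (s * u)) = (η s * η s) * (η u * χ (s * u)) from by
        ring, hηsq s hs, one_mul]
  have key1 : ∀ s : F, s ≠ 0 → ∑ u : F, χ (s * u ^ 2) = η s * ∑ t : F, η t * χ t := by
    intro s hs
    have fib := Finset.sum_fiberwise' Finset.univ (fun u : F => u ^ 2)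
      (fun t : F => χ (s * t))
    rw [← fib]
    have : ∀ t : F, ∑ _u ∈ Finset.univ.filter (fun u : F => u ^ 2 = t), χ (s * t)
        = (η t + 1) * χ (s * t) := by
      intro t
      rw [Finset.sum_const, nsmul_eq_mul, hcard]
    rw [Finset.sum_congr rfl (fun t _ => this t)]
    simp_rw [add_mul, one_mul, Finset.sum_add_distrib, hlin s hs, add_zero]
    exact hshift s hs
  have key2 : ∀ s a : F, s ≠ 0 → ∑ t : F, χ (s * t ^ 2 - a * t)
      = χ (-(a ^ 2) / (4 * s)) * (η s * ∑ t : F, η t * χ t) := by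
    intro s a hs
    have hc : ∀ t : F, s * t ^ 2 - a * t
        = s * (t - a / (2 * s)) ^ 2 + -(a ^ 2) / (4 * s) := by
      intro t; field_simp; ring
    simp_rw [hc, AddChar.map_add_eq_mul]
    rw [← Finset.sum_mul, mul_comm]
    congr 1
    rw [← key1 s hs]
    refine Fintype.sum_bijective (fun u : F => u - a / (2 * s))
      (Equiv.subRight (a / (2 * s))).bijective _ _ ?_
    intro u
    rfl
  -- G as full sum
  have hG' : G = ∑ t : F, η t * χ t := by
    rw [hG, Finset.sum_erase]
    rw [hη0, zero_mul]
  -- χ of a sum over Fin 3 is the product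
  have hχsum : ∀ f : Fin 3 → F, χ (∑ i, f i) = ∏ i, χ (f i) := by
    intro f
    rw [Fin.sum_univ_three, Fin.prod_univ_three, AddChar.map_add_eq_mul,
      AddChar.map_add_eq_mul]
  -- factorization of a sum over Fin 3 → F
  have hfact : ∀ g : Fin 3 → F → ℂ,
      ∑ x : Fin 3 → F, ∏ i, g i (x i) = ∏ i, ∑ t : F, g i t := by
    intro g
    rw [Finset.prod_univ_sum, Fintype.piFinset_univ]
  -- the s = 0 term vanishes
  have hzero : ∑ x : Fin 3 → F, χ (-(∑ i, m i * x i)) = 0 := by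
    obtain ⟨i₀, hi₀⟩ := Function.ne_iff.mp hm
    simp only [Pi.zero_apply] at hi₀
    have h1 : ∀ x : Fin 3 → F, χ (-(∑ i, m i * x i)) = ∏ i, χ (-(m i) * x i) := by
      intro x
      rw [← hχsum]
      congr 1
      rw [← Finset.sum_neg_distrib]
      exact Finset.sum_congr rfl fun i _ => by ring
    simp_rw [h1]
    rw [hfact (fun i t => χ (-(m i) * t))]
    refine Finset.prod_eq_zero (Finset.mem_univ i₀) ?_
    exact hlin (-(m i₀)) (neg_ne_zero.mpr hi₀)
  -- the s ≠ 0 terms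
  have hsterm : ∀ s : F, s ≠ 0 →
      ∑ x : Fin 3 → F, χ (s * (∑ i, x i ^ 2) + -(∑ i, m i * x i))
        = η s * χ (-(∑ i, m i ^ 2) / (4 * s)) * G ^ 3 := by
    intro s hs
    have h1 : ∀ x : Fin 3 → F, χ (s * (∑ i, x i ^ 2) + -(∑ i, m i * x i))
        = ∏ i, χ (s * x i ^ 2 - m i * x i) := by
      intro x
      rw [← hχsum]
      congr 1
      rw [Finset.mul_sum, Finset.sum_sub_distrib, sub_eq_add_neg]
    simp_rw [h1]
    rw [hfact (fun i t => χ (s * t ^ 2 - m i * t))]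
    have h2' : ∀ i : Fin 3, ∑ t : F, χ (s * t ^ 2 - m i * t)
        = χ (-(m i ^ 2) / (4 * s)) * (η s * ∑ t : F, η t * χ t) := fun i => key2 s (m i) hs
    rw [Finset.prod_congr rfl fun i _ => h2' i, Finset.prod_mul_distrib,
      Finset.prod_const, ← hχsum]
    have h3 : ∑ i, -(m i ^ 2) / (4 * s) = -(∑ i, m i ^ 2) / (4 * s) := by
      rw [← Finset.sum_div, ← Finset.sum_neg_distrib]
    rw [h3, ← hG']
    have hcube : (η s * G) ^ 3 = η s * G ^ 3 := by
      have : (η s * G) ^ 3 = (η s * η s) * (η s * G ^ 3) := by ring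
      rw [this, hηsq s hs, one_mul]
    rw [Finset.card_univ, Fintype.card_fin, hcube]
    ring
  -- the main counting identity
  have hq : ((Fintype.card F : ℂ)) ≠ 0 := Nat.cast_ne_zero.mpr Fintype.card_ne_zero
  have hVf : V = Finset.univ.filter (fun x : Fin 3 → F => ∑ i, x i ^ 2 = 0) := by
    ext x; simp [hV x]
  have main : (Fintype.card F : ℂ) * ∑ x ∈ V, χ (-(∑ i, m i * x i))
      = G ^ 3 * ∑ s ∈ Finset.univ.erase (0 : F), η s * χ (-(∑ i, m i ^ 2) / (4 * s)) := by
    calc (Fintype.card F : ℂ) * ∑ x ∈ V, χ (-(∑ i, m i * x i))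
        = ∑ x ∈ V, (Fintype.card F : ℂ) * χ (-(∑ i, m i * x i)) := Finset.mul_sum _ _ _
      _ = ∑ x : Fin 3 → F,
            (if (∑ i, x i ^ 2) = 0 then (Fintype.card F : ℂ) else 0)
              * χ (-(∑ i, m i * x i)) := by
          rw [hVf, Finset.sum_filter]
          exact Finset.sum_congr rfl fun x _ => by split <;> simp
      _ = ∑ x : Fin 3 → F, (∑ s : F, χ (s * ∑ i, x i ^ 2)) * χ (-(∑ i, m i * x i)) := by
          refine Finset.sum_congr rfl fun x _ => ?_
          rw [AddChar.sum_mulShift _ hprim]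
          split <;> simp
      _ = ∑ s : F, ∑ x : Fin 3 → F, χ (s * (∑ i, x i ^ 2) + -(∑ i, m i * x i)) := by
          simp_rw [Finset.sum_mul, ← AddChar.map_add_eq_mul]
          exact Finset.sum_comm
      _ = (∑ x : Fin 3 → F, χ ((0 : F) * (∑ i, x i ^ 2) + -(∑ i, m i * x i)))
            + ∑ s ∈ Finset.univ.erase (0 : F),
                ∑ x : Fin 3 → F, χ (s * (∑ i, x i ^ 2) + -(∑ i, m i * x i)) :=
          (Finset.add_sum_erase _ _ (Finset.mem_univ 0)).symm
      _ = ∑ s ∈ Finset.univ.erase (0 : F),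
            ∑ x : Fin 3 → F, χ (s * (∑ i, x i ^ 2) + -(∑ i, m i * x i)) := by
          have : ∑ x : Fin 3 → F, χ ((0 : F) * (∑ i, x i ^ 2) + -(∑ i, m i * x i)) = 0 := by
            simp_rw [zero_mul, zero_add]
            exact hzero
          rw [this, zero_add]
      _ = G ^ 3 * ∑ s ∈ Finset.univ.erase (0 : F),
            η s * χ (-(∑ i, m i ^ 2) / (4 * s)) := by
          rw [Finset.mul_sum]
          refine Finset.sum_congr rfl fun s hs => ?_
          rw [hsterm s (Finset.ne_of_mem_erase hs)]
          ring
  calc ∑ x ∈ V, χ (-(∑ i, m i * x i))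
      = (Fintype.card F : ℂ)⁻¹
          * ((Fintype.card F : ℂ) * ∑ x ∈ V, χ (-(∑ i, m i * x i))) := by
        rw [← mul_assoc, inv_mul_cancel₀ hq, one_mul]
    _ = (Fintype.card F : ℂ)⁻¹ * G ^ 3 *
          ∑ s ∈ Finset.univ.erase (0 : F), η s * χ (-(∑ i, m i ^ 2) / (4 * s)) := by
        rw [main, mul_assoc]
end
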